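/- arXiv:2303.17306 — 10 statements merged into one kernel-verified Lean document; each statement's English description precedes it below -/
import Mathlib

section
/- Let γ ∈ F_{q^n} be a root of an irreducible polynomial of degree n/k ≥ 2 over F_{q^k}, and let U be an m-dimensional F_q-subspace of F_{q^k}^2. Then V_{U,γ} = {u + vγ : (u,v) ∈ U} is a Sidon space in F_{q^n} if and only if for every pair of F_q-linearly independent vectors (u,v), (u',v') in U one has S^γ_{(u,v)} ∩ S^γ_{(u',v')} = F_q, where S^γ_{(u,v)} = {λ ∈ F_{q^n} : λ(u + vγ) ∈ V_{U,γ}}. -/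
/-- The multiplicative coset `a·F_q` inside `L`. -/
def qcoset (K : Type*) {L : Type*} [Field K] [Field L] [Algebra K L] (a : L) : Set L :=
  Set.range fun x : K => algebraMap K L x * a

/-- `V ⊆ L` is a Sidon space (as a set): for nonzero `a,b,c,d ∈ V` with `ab = cd`
we have `{aF_q, bF_q} = {cF_q, dF_q}`. -/
def IsSidonSet (K : Type*) {L : Type*} [Field K] [Field L] [Algebra K L] (V : Set L) : Prop :=
  ∀ a ∈ V, ∀ b ∈ V, ∀ c ∈ V, ∀ d ∈ V,
    a ≠ 0 → b ≠ 0 → c ≠ 0 → d ≠ 0 → a * b = c * d →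
      ({qcoset K a, qcoset K b} : Set (Set L)) = {qcoset K c, qcoset K d}

/-- `f` is scattered: `f(a)/a = f(b)/b` for nonzero `a,b` forces `F_q`-proportionality. -/
def IsScattered (K : Type*) {M : Type*} [Field K] [Field M] [Algebra K M] (f : M → M) : Prop :=
  ∀ a b : M, a ≠ 0 → b ≠ 0 → f a * b = f b * a → ∃ c : K, b = algebraMap K M c * a

/-- `f` is a Sidon space polynomial: `S_{x₀,f} ∩ S_{x₁,f} = F_q` for all
non-`F_q`-proportional `x₀, x₁`. -/
def IsSidonPoly (K : Type*) {M : Type*} [Field K] [Field M] [Algebra K M] (f : M → M) : Prop :=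
  ∀ x₀ x₁ : M,
    ¬ (∃ c : K, x₁ = algebraMap K M c * x₀ ∨ x₀ = algebraMap K M c * x₁) →
    {l : M | f (l * x₀) = l * f x₀} ∩ {l : M | f (l * x₁) = l * f x₁}
      = Set.range (algebraMap K M)

section Aux
variable {K M L : Type*} [Field K] [Field M] [Field L]
    [Algebra K M] [Algebra M L] [Algebra K L] [IsScalarTower K M L]

lemma qcoset_mul_left {k : K} (hk : k ≠ 0) (a : L) :
    qcoset K (algebraMap K L k * a) = qcoset K a := by
  ext y
  constructor
  · rintro ⟨x, rfl⟩
    exact ⟨x * k, by simp only [map_mul]; ring⟩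
  · rintro ⟨x, rfl⟩
    refine ⟨x * k⁻¹, ?_⟩
    have hkne : (algebraMap K L) k ≠ 0 := by
      simpa using (algebraMap K L).injective.ne hk
    simp only [map_mul, map_inv₀]
    field_simp

lemma exists_of_qcoset_eq {a b : L} (h : qcoset K a = qcoset K b) :
    ∃ k : K, a = algebraMap K L k * b := by
  have : a ∈ qcoset K b := by
    rw [← h]; exact ⟨1, by simp⟩
  obtain ⟨k, hk⟩ := this
  exact ⟨k, hk.symm⟩

lemma gamma_not_mem {γ : L} (hγ : Algebra.adjoin M {γ} = ⊤)
    (hdeg : 2 ≤ Module.finrank M L) : γ ∉ Set.range (algebraMap M L) := by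
  intro ⟨m, hm⟩
  have h1 : Algebra.adjoin M {γ} ≤ ⊥ := by
    rw [Algebra.adjoin_le_iff]
    rintro x rfl
    exact ⟨m, hm⟩
  rw [hγ, top_le_iff] at h1
  have h2 := Subalgebra.bot_eq_top_iff_finrank_eq_one.mp h1
  omega

/-- the map `(u,v) ↦ u + vγ`. -/
def sphi {M L : Type*} [Field M] [Field L] [Algebra M L] (γ : L) (p : M × M) : L :=
  algebraMap M L p.1 + algebraMap M L p.2 * γ

lemma phi_smul (γ : L) (k : K) (p : M × M) :
    sphi γ (k • p) = algebraMap K L k * sphi γ p := by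
  unfold sphi
  have h1 : (k • p).1 = k • p.1 := rfl
  have h2 : (k • p).2 = k • p.2 := rfl
  rw [h1, h2, Algebra.smul_def, Algebra.smul_def, map_mul, map_mul,
    ← IsScalarTower.algebraMap_apply]
  ring

lemma phi_inj {γ : L} (hγ : γ ∉ Set.range (algebraMap M L)) {p p' : M × M}
    (h : sphi γ p = sphi γ p') : p = p' := by
  unfold sphi at h
  by_cases h2 : p.2 = p'.2
  · have : algebraMap M L p.1 = algebraMap M L p'.1 := by
      rw [h2] at h; linear_combination h
    exact Prod.ext ((algebraMap M L).injective this) h2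
  · exfalso
    apply hγ
    have hne : algebraMap M L (p'.2 - p.2) ≠ 0 := by
      rw [map_sub, sub_ne_zero]
      exact fun hc => h2 ((algebraMap M L).injective hc.symm)
    have key : algebraMap M L (p'.2 - p.2) * γ = algebraMap M L (p.1 - p'.1) := by
      rw [map_sub, map_sub]; linear_combination -h
    refine ⟨(p.1 - p'.1) * (p'.2 - p.2)⁻¹, ?_⟩
    rw [map_mul, map_inv₀, ← key]
    rw [mul_comm, inv_mul_cancel_left₀ hne]

lemma sphi_zero {M L : Type*} [Field M] [Field L] [Algebra M L] (γ : L) :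
    sphi (M := M) γ 0 = 0 := by
  simp [sphi]

lemma phi_ne_zero {γ : L} (hγ : γ ∉ Set.range (algebraMap M L)) {p : M × M}
    (hp : p ≠ 0) : sphi γ p ≠ 0 := by
  intro h
  apply hp
  apply phi_inj hγ (p' := (0 : M × M))
  simpa [sphi] using h

end Aux

theorem stmt_1 {K M L : Type*} [Field K] [Field M] [Field L]
    [Algebra K M] [Algebra M L] [Algebra K L] [IsScalarTower K M L]
    [Fintype K] [Fintype M] [Fintype L]
    (γ : L) (hγ : Algebra.adjoin M {γ} = ⊤) (hdeg : 2 ≤ Module.finrank M L)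
    (m : ℕ) (U : Submodule K (M × M)) (hU : Module.finrank K U = m) :
    IsSidonSet K {x : L | ∃ p ∈ U, x = algebraMap M L p.1 + algebraMap M L p.2 * γ} ↔
      ∀ p ∈ U, ∀ p' ∈ U, LinearIndependent K ![p, p'] →
        {lam : L | ∃ p'' ∈ U, lam * (algebraMap M L p.1 + algebraMap M L p.2 * γ)
            = algebraMap M L p''.1 + algebraMap M L p''.2 * γ}
          ∩ {lam : L | ∃ p'' ∈ U, lam * (algebraMap M L p'.1 + algebraMap M L p'.2 * γ)
            = algebraMap M L p''.1 + algebraMap M L p''.2 * γ}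
          = Set.range (algebraMap K L) := by
  have hγr : γ ∉ Set.range (algebraMap M L) := gamma_not_mem hγ hdeg
  show IsSidonSet K {x : L | ∃ p ∈ U, x = sphi γ p} ↔
      ∀ p ∈ U, ∀ p' ∈ U, LinearIndependent K ![p, p'] →
        {lam : L | ∃ p'' ∈ U, lam * sphi γ p = sphi γ p''}
          ∩ {lam : L | ∃ p'' ∈ U, lam * sphi γ p' = sphi γ p''}
          = Set.range (algebraMap K L)
  set φ : (M × M) → L := sphi γ with hφ
  have hφinj : ∀ {p p' : M × M}, φ p = φ p' → p = p' := fun h => phi_inj hγr h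
  have hφ0 : ∀ {p : M × M}, p ≠ 0 → φ p ≠ 0 := fun h => phi_ne_zero hγr h
  have hφs : ∀ (k : K) (p : M × M), φ (k • p) = algebraMap K L k * φ p :=
    fun k p => phi_smul γ k p
  constructor
  · intro hS p hp p' hp' hli
    have hp0 : p ≠ 0 := by simpa using hli.ne_zero 0
    have hp'0 : p' ≠ 0 := by simpa using hli.ne_zero 1
    ext lam
    constructor
    · rintro ⟨⟨pc, hpc, hc⟩, ⟨pd, hpd, hd⟩⟩
      by_cases hlam : lam = 0
      · exact ⟨0, by simp [hlam]⟩
      have hvp : φ p ≠ 0 := hφ0 hp0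
      have hvp' : φ p' ≠ 0 := hφ0 hp'0
      have hcne : φ pc ≠ 0 := by rw [← hc]; exact mul_ne_zero hlam hvp
      have hdne : φ pd ≠ 0 := by rw [← hd]; exact mul_ne_zero hlam hvp'
      have key := hS (φ pc) ⟨pc, hpc, rfl⟩ (φ p') ⟨p', hp', rfl⟩
        (φ pd) ⟨pd, hpd, rfl⟩ (φ p) ⟨p, hp, rfl⟩ hcne hvp' hdne hvp
        (by rw [← hc, ← hd]; ring)
      have hmem : qcoset K (φ p') ∈ ({qcoset K (φ pd), qcoset K (φ p)} : Set (Set L)) := by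
        rw [← key]; exact Set.mem_insert_iff.mpr (Or.inr rfl)
      rw [Set.mem_insert_iff, Set.mem_singleton_iff] at hmem
      rcases hmem with h1 | h2
      · -- qcoset (φ p') = qcoset (φ pd)
        obtain ⟨k, hk⟩ := exists_of_qcoset_eq h1
        rw [← hd] at hk
        have hk0 : algebraMap K L k * lam = 1 := by
          have : (algebraMap K L k * lam) * φ p' = 1 * φ p' := by
            rw [one_mul]; linear_combination -hk
          exact mul_right_cancel₀ hvp' this
        have hkne : algebraMap K L k ≠ 0 := fun h => by simp [h] at hk0
        have hkK : k ≠ 0 := fun h => hkne (by simp [h])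
        refine ⟨k⁻¹, ?_⟩
        rw [map_inv₀]
        exact inv_eq_of_mul_eq_one_right hk0
      · -- qcoset (φ p') = qcoset (φ p) : contradiction with independence
        exfalso
        obtain ⟨k, hk⟩ := exists_of_qcoset_eq h2
        have hkK : k ≠ 0 := by
          rintro rfl; rw [map_zero, zero_mul] at hk; exact hvp' hk
        have : p' = k • p := hφinj (by rw [hφs]; exact hk)
        exact (linearIndependent_fin2.mp hli).2 k⁻¹
          (by rw [show (![p, p'] : Fin 2 → M × M) 1 = p' from rfl,
                show (![p, p'] : Fin 2 → M × M) 0 = p from rfl, this, smul_smul,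
                inv_mul_cancel₀ hkK, one_smul])
    · rintro ⟨k, rfl⟩
      exact ⟨⟨k • p, U.smul_mem k hp, (hφs k p).symm⟩,
             ⟨k • p', U.smul_mem k hp', (hφs k p').symm⟩⟩
  · rintro hI a ha b hb c hc d hd ha0 hb0 hc0 hd0 habcd
    obtain ⟨pa, hpa, rfl⟩ := ha
    obtain ⟨pb, hpb, rfl⟩ := hb
    obtain ⟨pc, hpc, rfl⟩ := hc
    obtain ⟨pd, hpd, rfl⟩ := hd
    by_cases hdep : LinearIndependent K ![pa, pd]
    · have hset := hI pa hpa pd hpd hdep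
      set lam : L := φ pc * (φ pa)⁻¹ with hlam
      have hl1 : lam * φ pa = φ pc := by
        rw [hlam, mul_assoc, inv_mul_cancel₀ ha0, mul_one]
      have hl2 : lam * φ pd = φ pb := by
        rw [hlam]
        field_simp
        linear_combination -habcd
      have : lam ∈ Set.range (algebraMap K L) := by
        rw [← hset]
        exact ⟨⟨pc, hpc, hl1⟩, ⟨pb, hpb, hl2⟩⟩
      obtain ⟨k, hk⟩ := this
      have hkK : k ≠ 0 := by
        rintro rfl
        rw [map_zero] at hk
        rw [← hk, zero_mul] at hl1
        exact hc0 hl1.symm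
      have e1 : qcoset K (φ pc) = qcoset K (φ pa) := by
        rw [← hl1, ← hk]; exact qcoset_mul_left hkK _
      have e2 : qcoset K (φ pb) = qcoset K (φ pd) := by
        rw [← hl2, ← hk]; exact qcoset_mul_left hkK _
      rw [e1, e2]
    · have hpa0 : pa ≠ 0 := fun h => ha0 (by rw [h]; exact sphi_zero γ)
      have hpd0 : pd ≠ 0 := fun h => hd0 (by rw [h]; exact sphi_zero γ)
      rw [linearIndependent_fin2] at hdep
      push_neg at hdep
      simp only [Matrix.cons_val_one, Matrix.head_cons, Matrix.cons_val_zero] at hdep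
      obtain ⟨k, hk⟩ := hdep hpd0
      have hkK : k ≠ 0 := by rintro rfl; rw [zero_smul] at hk; exact hpa0 hk.symm
      have e1 : qcoset K (φ pa) = qcoset K (φ pd) := by
        rw [← hk, hφs]; exact qcoset_mul_left hkK _
      have hcb : algebraMap K L k * φ pb = φ pc := by
        have : (algebraMap K L k * φ pb) * φ pd = φ pc * φ pd := by
          rw [← habcd, ← hk, hφs]; ring
        exact mul_right_cancel₀ (hφ0 hpd0) this
      have e2 : qcoset K (φ pc) = qcoset K (φ pb) := by
        rw [← hcb]; exact qcoset_mul_left hkK _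
      rw [e1, e2]
      exact Set.pair_comm _ _
end

section
/- Let U be an F_q-subspace of F_{q^k}^2 and γ a root of an irreducible polynomial over F_{q^k} of degree greater than 2. Then U has the Sidon space property with respect to γ (meaning S^γ_{(u,v)} ∩ S^γ_{(u',v')} = F_q for all F_q-linearly independent (u,v),(u',v') ∈ U) if and only if S_{(u,v)} ∩ S_{(u',v')} = F_q for all F_q-linearly independent (u,v),(u',v') ∈ U, where S_{(u,v)} = {λ ∈ F_{q^k} : λ(u,v) ∈ U}. -/
open Polynomial IntermediateField in
lemma aux_indep3 {M L : Type*} [Field M] [Field L] [Algebra M L] [Finite L]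
    (γ : L) (hγ : Algebra.adjoin M {γ} = ⊤) (hdeg : 2 < Module.finrank M L)
    (x y z : M)
    (h : algebraMap M L x + algebraMap M L y * γ + algebraMap M L z * γ ^ 2 = 0) :
    x = 0 ∧ y = 0 ∧ z = 0 := by
  have hint : IsIntegral M γ := IsIntegral.of_finite M γ
  have htop : M⟮γ⟯ = ⊤ := by
    apply IntermediateField.toSubalgebra_injective
    rw [IntermediateField.adjoin_simple_toSubalgebra_of_isAlgebraic hint.isAlgebraic, hγ]
    rfl
  have hdeg' : 2 < (minpoly M γ).natDegree := by
    rw [(Field.primitive_element_iff_minpoly_natDegree_eq M γ).mp htop]; exact hdeg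
  by_contra hcon
  have hne : (C x + C y * X + C z * X ^ 2 : M[X]) ≠ 0 := by
    intro h0
    apply hcon
    refine ⟨?_, ?_, ?_⟩
    · have := congrArg (fun p => coeff p 0) h0; simpa using this
    · have := congrArg (fun p => coeff p 1) h0; simpa using this
    · have := congrArg (fun p => coeff p 2) h0; simpa using this
  have haev : (aeval γ) (C x + C y * X + C z * X ^ 2 : M[X]) = 0 := by
    simpa using h
  have hle : (minpoly M γ).degree ≤ (C x + C y * X + C z * X ^ 2 : M[X]).degree :=
    minpoly.degree_le_of_ne_zero M γ hne haev
  have hdegp : ((C x + C y * X + C z * X ^ 2 : M[X])).natDegree ≤ 2 := by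
    apply natDegree_add_le_of_degree_le
    · apply natDegree_add_le_of_degree_le
      · exact (natDegree_C x).le.trans (by norm_num)
      · exact (natDegree_C_mul_le y X).trans (by simp)
    · exact (natDegree_C_mul_le z (X ^ 2)).trans (by simp)
  have : (minpoly M γ).natDegree ≤ 2 := by
    have := Polynomial.natDegree_le_natDegree hle
    omega
  omega


/-- for `[F_{q^k}(γ) : F_{q^k}] > 2`, the Sidon space property with respect
to `γ` is equivalent to the (γ-free) Sidon space property of `U`. -/
theorem stmt_2 {K M L : Type*} [Field K] [Field M] [Field L]
    [Algebra K M] [Algebra M L] [Algebra K L] [IsScalarTower K M L]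
    [Fintype K] [Fintype M] [Fintype L]
    (γ : L) (hγ : Algebra.adjoin M {γ} = ⊤) (hdeg : 2 < Module.finrank M L)
    (U : Submodule K (M × M)) :
    (∀ p ∈ U, ∀ p' ∈ U, LinearIndependent K ![p, p'] →
        {lam : L | ∃ p'' ∈ U, lam * (algebraMap M L p.1 + algebraMap M L p.2 * γ)
            = algebraMap M L p''.1 + algebraMap M L p''.2 * γ}
          ∩ {lam : L | ∃ p'' ∈ U, lam * (algebraMap M L p'.1 + algebraMap M L p'.2 * γ)
            = algebraMap M L p''.1 + algebraMap M L p''.2 * γ}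
          = Set.range (algebraMap K L)) ↔
      (∀ p ∈ U, ∀ p' ∈ U, LinearIndependent K ![p, p'] →
        {lam : M | (lam * p.1, lam * p.2) ∈ U} ∩ {lam : M | (lam * p'.1, lam * p'.2) ∈ U}
          = Set.range (algebraMap K M)) := by
  have key3 := aux_indep3 γ hγ hdeg
  have key2 : ∀ x y : M, algebraMap M L x + algebraMap M L y * γ = 0 → x = 0 ∧ y = 0 := by
    intro x y h
    have := key3 x y 0 (by simpa using h)
    exact ⟨this.1, this.2.1⟩
  have hinj : Function.Injective (algebraMap M L) := (algebraMap M L).injective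
  have htow : ∀ c : K, algebraMap K L c = algebraMap M L (algebraMap K M c) :=
    fun c => IsScalarTower.algebraMap_apply K M L c
  have hsmul : ∀ (c : K) (q : M × M), c • q = (algebraMap K M c * q.1, algebraMap K M c * q.2) := by
    intro c q
    ext <;> simp [Algebra.smul_def]
  constructor
  · -- LHS → RHS
    intro H p hp p' hp' hind
    ext l
    constructor
    · rintro ⟨hl1, hl2⟩
      have hmem : algebraMap M L l ∈ Set.range (algebraMap K L) := by
        rw [← H p hp p' hp' hind]
        constructor
        · exact ⟨(l * p.1, l * p.2), hl1, by push_cast [map_mul]; ring⟩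
        · exact ⟨(l * p'.1, l * p'.2), hl2, by push_cast [map_mul]; ring⟩
      obtain ⟨c, hc⟩ := hmem
      refine ⟨c, hinj ?_⟩
      rw [← htow c, hc]
    · rintro ⟨c, rfl⟩
      constructor
      · have := U.smul_mem c hp; rw [hsmul] at this; exact this
      · have := U.smul_mem c hp'; rw [hsmul] at this; exact this
  · -- RHS → LHS
    intro H p hp p' hp' hind
    have hp0 : p ≠ 0 := hind.ne_zero 0
    have hp'0 : p' ≠ 0 := by
      have := hind.ne_zero 1; simpa using this
    set a : L := algebraMap M L p.1 + algebraMap M L p.2 * γ with ha_def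
    set b : L := algebraMap M L p'.1 + algebraMap M L p'.2 * γ with hb_def
    have ha : a ≠ 0 := by
      intro h0
      obtain ⟨h1, h2⟩ := key2 _ _ h0
      exact hp0 (Prod.ext h1 h2)
    ext l
    constructor
    · rintro ⟨⟨p₁, hp₁U, hp₁⟩, p₂, hp₂U, hp₂⟩
      by_cases hD : p.1 * p'.2 - p'.1 * p.2 = 0
      · -- p' proportional to p over M
        obtain ⟨μ, hμ1, hμ2⟩ : ∃ μ : M, p'.1 = μ * p.1 ∧ p'.2 = μ * p.2 := by
          by_cases h1 : p.1 = 0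
          · have h2 : p.2 ≠ 0 := by
              intro h2; exact hp0 (Prod.ext h1 h2)
            refine ⟨p'.2 / p.2, ?_, by field_simp⟩
            have h3 : p'.1 * p.2 = 0 := by rw [h1] at hD; linear_combination -hD
            rcases mul_eq_zero.mp h3 with h | h
            · rw [h, h1]; ring
            · exact absurd h h2
          · refine ⟨p'.1 / p.1, by field_simp, ?_⟩
            field_simp
            linear_combination hD
        have hb : b = algebraMap M L μ * a := by
          rw [hb_def, ha_def, hμ1, hμ2]
          push_cast [map_mul]
          ring
        have hp₂eq : p₂.1 = μ * p₁.1 ∧ p₂.2 = μ * p₁.2 := by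
          have h4 : algebraMap M L (μ * p₁.1 - p₂.1)
              + algebraMap M L (μ * p₁.2 - p₂.2) * γ = 0 := by
            have h1 : l * b = algebraMap M L μ * (algebraMap M L p₁.1
                + algebraMap M L p₁.2 * γ) := by
              rw [hb, ← hp₁]
              ring
            rw [hp₂] at h1
            push_cast [map_sub, map_mul] at h1 ⊢
            linear_combination -h1
          have h5 := key2 _ _ h4
          exact ⟨(sub_eq_zero.mp h5.1).symm, (sub_eq_zero.mp h5.2).symm⟩
        have hμK : ∀ c : K, algebraMap K M c ≠ μ := by
          intro c hc
          have : p' = c • p := by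
            rw [hsmul, hc]
            exact Prod.ext hμ1 hμ2
          rw [LinearIndependent.pair_iff] at hind
          have := (hind c (-1) (by rw [this]; module)).2
          simpa using this
        by_cases hc : ∃ c : K, p₁ = c • p
        · obtain ⟨c, hcc⟩ := hc
          have hla : l * a = algebraMap K L c * a := by
            rw [hp₁, hcc, hsmul, ha_def, htow]
            push_cast [map_mul]
            ring
          exact ⟨c, (mul_right_cancel₀ ha hla).symm⟩
        · exfalso
          have hind₁ : LinearIndependent K ![p, p₁] := by
            rw [LinearIndependent.pair_iff]
            intro s t hst
            by_cases ht : t = 0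
            · subst ht
              simp only [zero_smul, add_zero, smul_eq_zero] at hst
              rcases hst with h | h
              · exact ⟨h, rfl⟩
              · exact absurd h hp0
            · exfalso
              apply hc
              refine ⟨-(t⁻¹ * s), ?_⟩
              have h3 := congrArg (fun v => (t⁻¹ : K) • v) hst
              simp only [smul_add, smul_smul, smul_zero] at h3
              rw [inv_mul_cancel₀ ht, one_smul] at h3
              have h2 : p₁ = -((t⁻¹ * s) • p) := eq_neg_of_add_eq_zero_right h3
              rw [h2, neg_smul]
          have hμmem : μ ∈ Set.range (algebraMap K M) := by
            rw [← H p hp p₁ hp₁U hind₁]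
            constructor
            · show (μ * p.1, μ * p.2) ∈ U
              rw [← hμ1, ← hμ2]
              exact hp'
            · show (μ * p₁.1, μ * p₁.2) ∈ U
              rw [← hp₂eq.1, ← hp₂eq.2]
              exact hp₂U
          obtain ⟨c, hc'⟩ := hμmem
          exact hμK c hc'
      · -- a, b linearly independent over M
        set D := p.1 * p'.2 - p'.1 * p.2 with hD_def
        set s : M := p'.2 / D with hs_def
        set t : M := -p.2 / D with ht_def
        set s' : M := -p'.1 / D with hs'_def
        set t' : M := p.1 / D with ht'_def
        have h1 : algebraMap M L s * a + algebraMap M L t * b = 1 := by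
          have e1 : s * p.1 + t * p'.1 = 1 := by
            rw [hs_def, ht_def]; field_simp; ring
          have e2 : s * p.2 + t * p'.2 = 0 := by
            rw [hs_def, ht_def]; field_simp; ring
          have heq : algebraMap M L s * a + algebraMap M L t * b
              = algebraMap M L (s * p.1 + t * p'.1)
                + algebraMap M L (s * p.2 + t * p'.2) * γ := by
            rw [ha_def, hb_def]; push_cast [map_mul]; ring
          rw [heq, e1, e2]; simp
        have h2 : algebraMap M L s' * a + algebraMap M L t' * b = γ := by
          have e1 : s' * p.1 + t' * p'.1 = 0 := by
            rw [hs'_def, ht'_def]; field_simp; ring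
          have e2 : s' * p.2 + t' * p'.2 = 1 := by
            rw [hs'_def, ht'_def]; field_simp; ring
          have heq : algebraMap M L s' * a + algebraMap M L t' * b
              = algebraMap M L (s' * p.1 + t' * p'.1)
                + algebraMap M L (s' * p.2 + t' * p'.2) * γ := by
            rw [ha_def, hb_def]; push_cast [map_mul]; ring
          rw [heq, e1, e2]; simp
        set x : M := s * p₁.1 + t * p₂.1 with hx_def
        set y : M := s * p₁.2 + t * p₂.2 with hy_def
        set x' : M := s' * p₁.1 + t' * p₂.1 with hx'_def
        set y' : M := s' * p₁.2 + t' * p₂.2 with hy'_def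
        have hl : l = algebraMap M L x + algebraMap M L y * γ := by
          calc l = l * (algebraMap M L s * a + algebraMap M L t * b) := by rw [h1]; ring
          _ = algebraMap M L s * (l * a) + algebraMap M L t * (l * b) := by ring
          _ = algebraMap M L x + algebraMap M L y * γ := by
              rw [hp₁, hp₂, hx_def, hy_def]; push_cast [map_mul]; ring
        have hlγ : l * γ = algebraMap M L x' + algebraMap M L y' * γ := by
          calc l * γ = l * (algebraMap M L s' * a + algebraMap M L t' * b) := by rw [h2]
          _ = algebraMap M L s' * (l * a) + algebraMap M L t' * (l * b) := by ring
          _ = algebraMap M L x' + algebraMap M L y' * γ := by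
              rw [hp₁, hp₂, hx'_def, hy'_def]; push_cast [map_mul]; ring
        have hzero : algebraMap M L x' + algebraMap M L (y' - x) * γ
            + algebraMap M L (-y) * γ ^ 2 = 0 := by
          push_cast [map_sub, map_neg]
          have hmul : (algebraMap M L x + algebraMap M L y * γ) * γ
              = algebraMap M L x' + algebraMap M L y' * γ := by rw [← hl]; exact hlγ
          linear_combination -hmul
        obtain ⟨hx'0, hy'x, hy0⟩ := key3 _ _ _ hzero
        have hy0' : y = 0 := neg_eq_zero.mp hy0
        have hlx : l = algebraMap M L x := by rw [hl, hy0']; simp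
        have hxp : (x * p.1, x * p.2) = p₁ := by
          have h4 : algebraMap M L (x * p.1 - p₁.1)
              + algebraMap M L (x * p.2 - p₁.2) * γ = 0 := by
            have h5 : algebraMap M L x * a = algebraMap M L p₁.1 + algebraMap M L p₁.2 * γ := by
              rw [← hlx]; exact hp₁
            rw [ha_def] at h5
            push_cast [map_sub, map_mul] at h5 ⊢
            linear_combination h5
          have h6 := key2 _ _ h4
          exact Prod.ext (sub_eq_zero.mp h6.1) (sub_eq_zero.mp h6.2)
        have hxp' : (x * p'.1, x * p'.2) = p₂ := by
          have h4 : algebraMap M L (x * p'.1 - p₂.1)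
              + algebraMap M L (x * p'.2 - p₂.2) * γ = 0 := by
            have h5 : algebraMap M L x * b = algebraMap M L p₂.1 + algebraMap M L p₂.2 * γ := by
              rw [← hlx]; exact hp₂
            rw [hb_def] at h5
            push_cast [map_sub, map_mul] at h5 ⊢
            linear_combination h5
          have h6 := key2 _ _ h4
          exact Prod.ext (sub_eq_zero.mp h6.1) (sub_eq_zero.mp h6.2)
        have hxmem : x ∈ Set.range (algebraMap K M) := by
          rw [← H p hp p' hp' hind]
          exact ⟨by rw [Set.mem_setOf_eq, hxp]; exact hp₁U,
                 by rw [Set.mem_setOf_eq, hxp']; exact hp₂U⟩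
        obtain ⟨c, hc⟩ := hxmem
        exact ⟨c, by rw [htow, hc, ← hlx]⟩
    · rintro ⟨c, rfl⟩
      constructor
      · refine ⟨c • p, U.smul_mem c hp, ?_⟩
        rw [hsmul, htow, ha_def]
        push_cast [map_mul]
        ring
      · refine ⟨c • p', U.smul_mem c hp', ?_⟩
        rw [hsmul, htow, hb_def]
        push_cast [map_mul]
        ring
end

section
/- If an F_q-subspace U of F_{q^k}^2 satisfies S_{(u,v)} ∩ S_{(u',v')} = F_q for every pair of F_q-linearly independent vectors (u,v),(u',v') ∈ U, then for every γ with [F_{q^k}(γ):F_{q^k}] > 2, the set V_{U,γ} = {u + vγ : (u,v) ∈ U} is a Sidon space in F_{q^k}(γ). -/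
lemma qcoset_smul' {K L : Type*} [Field K] [Field L] [Algebra K L] (c : K) (a : L) :
    Set.range (fun x : K => algebraMap K L x * (algebraMap K L c * a))
      ⊆ Set.range (fun x : K => algebraMap K L x * a) := by
  rintro y ⟨x, rfl⟩
  exact ⟨x * c, by simp [map_mul, mul_assoc]⟩

lemma qcoset_smul {K L : Type*} [Field K] [Field L] [Algebra K L] {c : K} (hc : c ≠ 0) (a : L) :
    Set.range (fun x : K => algebraMap K L x * (algebraMap K L c * a))
      = Set.range (fun x : K => algebraMap K L x * a) := by
  apply le_antisymm (qcoset_smul' c a)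
  rintro y ⟨x, rfl⟩
  refine ⟨x * c⁻¹, ?_⟩
  have hc' : algebraMap K L c ≠ 0 := by simpa using hc
  show algebraMap K L (x * c⁻¹) * (algebraMap K L c * a) = algebraMap K L x * a
  rw [map_mul, map_inv₀]
  field_simp

lemma prop_of_det {M : Type*} [Field M] {u₁ v₁ u₃ v₃ : M}
    (h1 : ¬(u₁ = 0 ∧ v₁ = 0)) (h3 : ¬(u₃ = 0 ∧ v₃ = 0))
    (hdet : u₁ * v₃ = u₃ * v₁) : ∃ t : M, t ≠ 0 ∧ u₃ = t * u₁ ∧ v₃ = t * v₁ := by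
  rcases eq_or_ne u₁ 0 with hu | hu
  · have hv : v₁ ≠ 0 := fun h => h1 ⟨hu, h⟩
    refine ⟨v₃ / v₁, ?_, ?_, (div_mul_cancel₀ _ hv).symm⟩
    · have hu3 : u₃ = 0 := by
        have := hdet
        rw [hu, zero_mul] at this
        rcases mul_eq_zero.mp this.symm with h | h
        · exact h
        · exact absurd h hv
      intro h
      rw [div_eq_zero_iff] at h
      rcases h with h | h
      · exact h3 ⟨hu3, h⟩
      · exact hv h
    · have hu3 : u₃ = 0 := by
        have := hdet
        rw [hu, zero_mul] at this
        rcases mul_eq_zero.mp this.symm with h | h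
        · exact h
        · exact absurd h hv
      rw [hu, hu3, mul_zero]
  · refine ⟨u₃ / u₁, ?_, (div_mul_cancel₀ _ hu).symm, ?_⟩
    · intro h
      rw [div_eq_zero_iff] at h
      rcases h with h | h
      · apply h3
        refine ⟨h, ?_⟩
        have := hdet
        rw [h, zero_mul] at this
        rcases mul_eq_zero.mp this with h' | h'
        · exact absurd h' hu
        · exact h'
      · exact hu h
    · rw [div_mul_eq_mul_div, eq_div_iff hu]
      linear_combination hdet

lemma prop_transfer {M : Type*} [Field M] {u₁ v₁ u₂ v₂ u₃ v₃ u₄ v₄ t : M}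
    (h1 : ¬(u₁ = 0 ∧ v₁ = 0))
    (e1 : u₁*u₂ = u₃*u₄) (e2 : u₁*v₂ + u₂*v₁ = u₃*v₄ + u₄*v₃) (e3 : v₁*v₂ = v₃*v₄)
    (h3 : u₃ = t*u₁) (h3' : v₃ = t*v₁) : u₂ = t*u₄ ∧ v₂ = t*v₄ := by
  subst h3 h3'
  rcases eq_or_ne u₁ 0 with hu | hu
  · have hv : v₁ ≠ 0 := fun h => h1 ⟨hu, h⟩
    subst hu
    constructor
    · apply mul_right_cancel₀ hv
      linear_combination e2
    · apply mul_left_cancel₀ hv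
      linear_combination e3
  · have hu2 : u₂ = t * u₄ := by
      apply mul_left_cancel₀ hu
      linear_combination e1
    refine ⟨hu2, ?_⟩
    rcases eq_or_ne v₁ 0 with hv | hv
    · apply mul_left_cancel₀ hu
      subst hv
      linear_combination e2
    · apply mul_left_cancel₀ hv
      linear_combination e3

lemma indep3 {M L : Type*} [Field M] [Field L] [Algebra M L] [Finite L]
    {γ : L} (hγ : Algebra.adjoin M {γ} = ⊤) (hdeg : 2 < Module.finrank M L)
    {c₀ c₁ c₂ : M}
    (h : algebraMap M L c₀ + algebraMap M L c₁ * γ + algebraMap M L c₂ * γ^2 = 0) :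
    c₀ = 0 ∧ c₁ = 0 ∧ c₂ = 0 := by
  have hint : IsIntegral M γ := IsIntegral.of_finite M γ
  have htop : IntermediateField.adjoin M {γ} = ⊤ :=
    IntermediateField.adjoin_eq_top_of_algebra M {γ} hγ
  have hdim : (minpoly M γ).natDegree = Module.finrank M L := by
    rw [← IntermediateField.adjoin.finrank hint, htop, IntermediateField.finrank_top']
  set P : Polynomial M := Polynomial.C c₂ * Polynomial.X ^ 2 + Polynomial.C c₁ * Polynomial.X
      + Polynomial.C c₀ with hP
  have haev : Polynomial.aeval γ P = 0 := by
    simp [hP, map_add, map_mul, Polynomial.aeval_X, Polynomial.aeval_C]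
    linear_combination h
  have hPz : P = 0 := by
    by_contra hne
    have hle := minpoly.degree_le_of_ne_zero M γ hne haev
    have hdegP : P.degree ≤ 2 := Polynomial.degree_quadratic_le
    have h2 : (minpoly M γ).natDegree ≤ 2 :=
      Polynomial.natDegree_le_iff_degree_le.mpr (le_trans hle hdegP)
    omega
  refine ⟨?_, ?_, ?_⟩
  · have := congrArg (fun Q => Polynomial.coeff Q 0) hPz
    simpa [hP] using this
  · have := congrArg (fun Q => Polynomial.coeff Q 1) hPz
    simpa [hP] using this
  · have := congrArg (fun Q => Polynomial.coeff Q 2) hPz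
    simpa [hP] using this

/-- if `U` has the Sidon space property, then `V_{U,γ}` is a Sidon space in
every extension `F_{q^k}(γ)` of degree greater than two. -/
theorem stmt_3 {K M : Type*} [Field K] [Field M] [Algebra K M] [Fintype K] [Fintype M]
    (U : Submodule K (M × M))
    (hU : ∀ p ∈ U, ∀ p' ∈ U, LinearIndependent K ![p, p'] →
      {lam : M | (lam * p.1, lam * p.2) ∈ U} ∩ {lam : M | (lam * p'.1, lam * p'.2) ∈ U}
        = Set.range (algebraMap K M))
    (L : Type*) [Field L] [Algebra M L] [Algebra K L] [IsScalarTower K M L] [Fintype L]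
    (γ : L) (hγ : Algebra.adjoin M {γ} = ⊤) (hdeg : 2 < Module.finrank M L) :
    IsSidonSet K {x : L | ∃ p ∈ U, x = algebraMap M L p.1 + algebraMap M L p.2 * γ} := by
  intro a ha b hb c hc d hd ha0 hb0 hc0 hd0 hab
  obtain ⟨⟨u₁, v₁⟩, hm₁, rfl⟩ := ha
  obtain ⟨⟨u₂, v₂⟩, hm₂, rfl⟩ := hb
  obtain ⟨⟨u₃, v₃⟩, hm₃, rfl⟩ := hc
  obtain ⟨⟨u₄, v₄⟩, hm₄, rfl⟩ := hd
  simp only at ha0 hb0 hc0 hd0 hab ⊢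
  set α := algebraMap M L with hα
  -- nonzero pairs
  have hp₁ : ¬(u₁ = 0 ∧ v₁ = 0) := by rintro ⟨rfl, rfl⟩; simp [hα] at ha0
  have hp₂ : ¬(u₂ = 0 ∧ v₂ = 0) := by rintro ⟨rfl, rfl⟩; simp [hα] at hb0
  have hp₃ : ¬(u₃ = 0 ∧ v₃ = 0) := by rintro ⟨rfl, rfl⟩; simp [hα] at hc0
  have hp₄ : ¬(u₄ = 0 ∧ v₄ = 0) := by rintro ⟨rfl, rfl⟩; simp [hα] at hd0
  -- coefficient equations
  have key : α (u₁*u₂ - u₃*u₄) + α (u₁*v₂ + u₂*v₁ - (u₃*v₄ + u₄*v₃)) * γ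
      + α (v₁*v₂ - v₃*v₄) * γ^2 = 0 := by
    simp only [hα, map_sub, map_add, map_mul]
    linear_combination hab
  obtain ⟨g1, g2, g3⟩ := indep3 hγ hdeg key
  have e1 : u₁*u₂ = u₃*u₄ := sub_eq_zero.mp g1
  have e2 : u₁*v₂ + u₂*v₁ = u₃*v₄ + u₄*v₃ := sub_eq_zero.mp g2
  have e3 : v₁*v₂ = v₃*v₄ := sub_eq_zero.mp g3
  -- determinant identity
  have hdet : (u₁ * v₃ - u₃ * v₁) * (u₁ * v₄ - u₄ * v₁) = 0 := by
    linear_combination -u₁^2 * e3 + u₁*v₁*e2 - v₁^2*e1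
  -- helper: scalar in K gives coset equality
  have hsc : ∀ (cc : K) (x : L), cc ≠ 0 → qcoset K (algebraMap K L cc * x) = qcoset K x := by
    intro cc x hcc
    exact qcoset_smul hcc x
  rcases mul_eq_zero.mp hdet with h13 | h14
  · -- (u₃,v₃) = t • (u₁,v₁)
    obtain ⟨t, ht0, h3u, h3v⟩ := prop_of_det hp₁ hp₃ (sub_eq_zero.mp h13)
    obtain ⟨h2u, h2v⟩ := prop_transfer hp₁ e1 e2 e3 h3u h3v
    by_cases hind : LinearIndependent K ![((u₁, v₁) : M × M), (u₄, v₄)]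
    · have hmem : t ∈ ({lam : M | (lam * u₁, lam * v₁) ∈ U} ∩
          {lam : M | (lam * u₄, lam * v₄) ∈ U}) := by
        constructor
        · show ((t * u₁, t * v₁) : M × M) ∈ U
          have : ((t * u₁, t * v₁) : M × M) = (u₃, v₃) := by rw [h3u, h3v]
          rw [this]; exact hm₃
        · show ((t * u₄, t * v₄) : M × M) ∈ U
          have : ((t * u₄, t * v₄) : M × M) = (u₂, v₂) := by rw [h2u, h2v]
          rw [this]; exact hm₂
      rw [hU (u₁, v₁) hm₁ (u₄, v₄) hm₄ hind] at hmem
      obtain ⟨cc, hcc⟩ := hmem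
      have hcc0 : cc ≠ 0 := by rintro rfl; rw [map_zero] at hcc; exact ht0 hcc.symm
      have hcL : α (algebraMap K M cc) = algebraMap K L cc :=
        (IsScalarTower.algebraMap_apply K M L cc).symm
      have hc_eq : α u₃ + α v₃ * γ = algebraMap K L cc * (α u₁ + α v₁ * γ) := by
        rw [h3u, h3v, ← hcc, map_mul, map_mul, hcL]; ring
      have hb_eq : α u₂ + α v₂ * γ = algebraMap K L cc * (α u₄ + α v₄ * γ) := by
        rw [h2u, h2v, ← hcc, map_mul, map_mul, hcL]; ring
      rw [hc_eq, hb_eq, hsc cc _ hcc0, hsc cc _ hcc0]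
    · -- dependent: ∃ e, e • p₄ = p₁
      rw [linearIndependent_fin2] at hind
      push_neg at hind
      simp only [Matrix.cons_val_one, Matrix.head_cons, Matrix.cons_val_zero] at hind
      have hp₄' : ((u₄, v₄) : M × M) ≠ 0 := by
        rintro h; exact hp₄ ⟨congrArg Prod.fst h, congrArg Prod.snd h⟩
      obtain ⟨e, he⟩ := hind hp₄'
      have he0 : e ≠ 0 := by
        rintro rfl
        rw [zero_smul] at he
        exact hp₁ ⟨congrArg Prod.fst he.symm, congrArg Prod.snd he.symm⟩
      have heu : u₁ = algebraMap K M e * u₄ := by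
        have := congrArg Prod.fst he; simpa [Algebra.smul_def] using this.symm
      have hev : v₁ = algebraMap K M e * v₄ := by
        have := congrArg Prod.snd he; simpa [Algebra.smul_def] using this.symm
      have hcL : α (algebraMap K M e) = algebraMap K L e :=
        (IsScalarTower.algebraMap_apply K M L e).symm
      have ha_eq : α u₁ + α v₁ * γ = algebraMap K L e * (α u₄ + α v₄ * γ) := by
        rw [heu, hev, map_mul, map_mul, hcL]; ring
      have hc_eq : α u₃ + α v₃ * γ = algebraMap K L e * (α u₂ + α v₂ * γ) := by
        apply mul_right_cancel₀ hd0
        rw [← hab, ha_eq]; ring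
      rw [ha_eq, hc_eq, hsc e _ he0, hsc e _ he0, Set.pair_comm]
  · -- (u₄,v₄) = t • (u₁,v₁)
    obtain ⟨t, ht0, h4u, h4v⟩ := prop_of_det hp₁ hp₄ (sub_eq_zero.mp h14)
    have e1' : u₁*u₂ = u₄*u₃ := by linear_combination e1
    have e2' : u₁*v₂ + u₂*v₁ = u₄*v₃ + u₃*v₄ := by linear_combination e2
    have e3' : v₁*v₂ = v₄*v₃ := by linear_combination e3
    obtain ⟨h2u, h2v⟩ := prop_transfer hp₁ e1' e2' e3' h4u h4v
    by_cases hind : LinearIndependent K ![((u₁, v₁) : M × M), (u₃, v₃)]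
    · have hmem : t ∈ ({lam : M | (lam * u₁, lam * v₁) ∈ U} ∩
          {lam : M | (lam * u₃, lam * v₃) ∈ U}) := by
        constructor
        · show ((t * u₁, t * v₁) : M × M) ∈ U
          have : ((t * u₁, t * v₁) : M × M) = (u₄, v₄) := by rw [h4u, h4v]
          rw [this]; exact hm₄
        · show ((t * u₃, t * v₃) : M × M) ∈ U
          have : ((t * u₃, t * v₃) : M × M) = (u₂, v₂) := by rw [h2u, h2v]
          rw [this]; exact hm₂
      rw [hU (u₁, v₁) hm₁ (u₃, v₃) hm₃ hind] at hmem
      obtain ⟨cc, hcc⟩ := hmem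
      have hcc0 : cc ≠ 0 := by rintro rfl; rw [map_zero] at hcc; exact ht0 hcc.symm
      have hcL : α (algebraMap K M cc) = algebraMap K L cc :=
        (IsScalarTower.algebraMap_apply K M L cc).symm
      have hd_eq : α u₄ + α v₄ * γ = algebraMap K L cc * (α u₁ + α v₁ * γ) := by
        rw [h4u, h4v, ← hcc, map_mul, map_mul, hcL]; ring
      have hb_eq : α u₂ + α v₂ * γ = algebraMap K L cc * (α u₃ + α v₃ * γ) := by
        rw [h2u, h2v, ← hcc, map_mul, map_mul, hcL]; ring
      rw [hd_eq, hb_eq, hsc cc _ hcc0, hsc cc _ hcc0, Set.pair_comm]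
    · rw [linearIndependent_fin2] at hind
      push_neg at hind
      simp only [Matrix.cons_val_one, Matrix.head_cons, Matrix.cons_val_zero] at hind
      have hp₃' : ((u₃, v₃) : M × M) ≠ 0 := by
        rintro h; exact hp₃ ⟨congrArg Prod.fst h, congrArg Prod.snd h⟩
      obtain ⟨e, he⟩ := hind hp₃'
      have he0 : e ≠ 0 := by
        rintro rfl
        rw [zero_smul] at he
        exact hp₁ ⟨congrArg Prod.fst he.symm, congrArg Prod.snd he.symm⟩
      have heu : u₁ = algebraMap K M e * u₃ := by
        have := congrArg Prod.fst he; simpa [Algebra.smul_def] using this.symm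
      have hev : v₁ = algebraMap K M e * v₃ := by
        have := congrArg Prod.snd he; simpa [Algebra.smul_def] using this.symm
      have hcL : α (algebraMap K M e) = algebraMap K L e :=
        (IsScalarTower.algebraMap_apply K M L e).symm
      have ha_eq : α u₁ + α v₁ * γ = algebraMap K L e * (α u₃ + α v₃ * γ) := by
        rw [heu, hev, map_mul, map_mul, hcL]; ring
      have hd_eq : α u₄ + α v₄ * γ = algebraMap K L e * (α u₂ + α v₂ * γ) := by
        apply mul_left_cancel₀ hc0
        rw [← hab, ha_eq]; ring
      rw [ha_eq, hd_eq, hsc e _ he0, hsc e _ he0]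
end

section
/- Every scattered q-polynomial f ∈ L_{k,q} is a Sidon space polynomial, i.e., for all x_0, x_1 ∈ F_{q^k} that are not F_q-proportional, S_{x_0,f} ∩ S_{x_1,f} = F_q, where S_{x,f} = {λ ∈ F_{q^k} : f(λx) = λ f(x)}. -/
/- A scattered `f` already has `S_{x,f} = F_q` for every single `x ≠ 0`: if `f(λx) = λ f(x)` then
`x` and `λx` have the same ratio `f(·)/·`, so `λx` is an `F_q`-multiple of `x`. -/

section

variable {K M : Type*} [Field K] [Field M] [Algebra K M]

theorem IsScattered.exists_algebraMap_eq_of_map_mul {f : M → M} (hf : IsScattered K f)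
    {x l : M} (hx : x ≠ 0) (hl : f (l * x) = l * f x) : ∃ c : K, algebraMap K M c = l := by
  rcases eq_or_ne l 0 with rfl | hl0
  · exact ⟨0, map_zero _⟩
  obtain ⟨c, hc⟩ := hf x (l * x) hx (mul_ne_zero hl0 hx) (by rw [hl]; ring)
  exact ⟨c, (mul_right_cancel₀ hx hc).symm⟩

theorem range_algebraMap_subset_setOf_map_mul (f : M →ₗ[K] M) (x : M) :
    Set.range (algebraMap K M) ⊆ {l : M | f (l * x) = l * f x} := by
  rintro _ ⟨c, rfl⟩
  exact f.map_algebraMap_mul x c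

theorem IsScattered.setOf_map_mul_eq_range {f : M →ₗ[K] M} (hf : IsScattered K (⇑f))
    {x : M} (hx : x ≠ 0) :
    {l : M | f (l * x) = l * f x} = Set.range (algebraMap K M) :=
  Set.Subset.antisymm (fun _ hl => hf.exists_algebraMap_eq_of_map_mul hx hl)
    (range_algebraMap_subset_setOf_map_mul f x)

end

theorem stmt_6_general {K M : Type*} [Field K] [Field M] [Algebra K M]
    (f : M →ₗ[K] M) (hf : IsScattered K (⇑f)) :
    IsSidonPoly K (⇑f) := by
  intro x₀ x₁ hprop
  have hx₀ : x₀ ≠ 0 := by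
    rintro rfl
    exact hprop ⟨0, Or.inr (by simp)⟩
  rw [hf.setOf_map_mul_eq_range hx₀]
  exact Set.inter_eq_left.mpr (range_algebraMap_subset_setOf_map_mul f x₁)

/-- every scattered `q`-polynomial is a Sidon space polynomial. -/
theorem stmt_6 {K M : Type*} [Field K] [Field M] [Algebra K M] [Fintype K] [Fintype M]
    (f : M →ₗ[K] M) (hf : IsScattered K (⇑f)) :
    IsSidonPoly K (⇑f) :=
  stmt_6_general f hf
end

section
/- Let f(x) = x^{q^i} + δ x^{q^j} over F_{q^k} with δ ≠ 0, j > i ≥ 1, and gcd(k, j-i) = t > 1 (write j = i + st with gcd(s,k) = 1, t | k, t > 1). Then f is a Sidon space polynomial if and only if f is a scattered polynomial. -/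
/-- for `f(x) = x^{q^i} + δ x^{q^j}` with `δ ≠ 0`, `j = i + st`,
`gcd(s,k) = 1`, `t ∣ k`, `t > 1`: `f` Sidon space polynomial iff `f` scattered. -/
theorem stmt_11 {K M : Type*} [Field K] [Field M] [Algebra K M] [Fintype K] [Fintype M]
    (k : ℕ) (hk : Module.finrank K M = k)
    (δ : M) (hδ : δ ≠ 0) (i j s t : ℕ) (hi : 1 ≤ i) (hij : i < j)
    (hj : j = i + s * t) (hs : Nat.gcd s k = 1) (ht : 1 < t) (htk : t ∣ k) :
    IsSidonPoly K (fun x : M => x ^ Fintype.card K ^ i + δ * x ^ Fintype.card K ^ j) ↔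
      IsScattered K (fun x : M => x ^ Fintype.card K ^ i + δ * x ^ Fintype.card K ^ j) := by
  classical
  set q := Fintype.card K with hq
  have hq2 : 2 ≤ q := Fintype.one_lt_card
  have hkpos : 0 < k := hk ▸ Module.finrank_pos
  set f : M → M := fun x => x ^ q ^ i + δ * x ^ q ^ j with hf
  have hfix : ∀ (c : K) (n : ℕ), (algebraMap K M c) ^ q ^ n = algebraMap K M c := by
    intro c n
    rw [← map_pow, FiniteField.pow_card_pow]
  have hlin : ∀ (c : K) (x : M), f (algebraMap K M c * x) = algebraMap K M c * f x := by
    intro c x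
    simp only [hf, mul_pow, hfix, mul_add]
    ring
  constructor
  · -- Sidon ⇒ scattered
    intro hS a b ha hb hab
    -- existence of ρ in F_{q^t} \ F_q
    obtain ⟨ρ, hρt, hρq⟩ : ∃ ρ : M, ρ ^ q ^ t = ρ ∧ ρ ∉ Set.range (algebraMap K M) := by
      have hqk1 : 1 < q ^ k := one_lt_pow₀ (by omega) (by omega)
      have hN0 : q ^ k - 1 ≠ 0 := by omega
      have hdvd : (q ^ t - 1) ∣ (q ^ k - 1) := by
        obtain ⟨m, rfl⟩ := htk
        have h := Nat.sub_dvd_pow_sub_pow (q ^ t) 1 m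
        simpa [← pow_mul] using h
      have hcardM : Fintype.card M = q ^ k := by
        rw [Module.card_eq_pow_finrank (K := K) (V := M), hk]
      have hcardU : Nat.card Mˣ = q ^ k - 1 := by
        rw [Nat.card_eq_fintype_card, Fintype.card_units, hcardM]
      obtain ⟨g, hg⟩ := IsCyclic.exists_generator (α := Mˣ)
      have horder : orderOf g = q ^ k - 1 := by
        rw [orderOf_eq_card_of_forall_mem_zpowers hg, hcardU]
      set n := (q ^ k - 1) / (q ^ t - 1) with hn
      have hndvd : n ∣ q ^ k - 1 := Nat.div_dvd_of_dvd hdvd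
      have hou : orderOf (g ^ n) = q ^ t - 1 := by
        rw [orderOf_pow, horder, Nat.gcd_eq_right hndvd, hn, Nat.div_div_self hdvd hN0]
      have hqt1 : 1 ≤ q ^ t := Nat.one_le_pow _ _ (by omega)
      refine ⟨((g ^ n : Mˣ) : M), ?_, ?_⟩
      · have h1 : (g ^ n) ^ (q ^ t - 1) = 1 := by
          rw [← hou]; exact pow_orderOf_eq_one _
        have h2 : (g ^ n) ^ (q ^ t) = g ^ n := by
          calc (g ^ n) ^ (q ^ t) = (g ^ n) ^ (q ^ t - 1) * (g ^ n) ^ 1 := by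
                rw [← pow_add]; congr 1; omega
            _ = g ^ n := by rw [h1, one_mul, pow_one]
        calc ((g ^ n : Mˣ) : M) ^ (q ^ t) = (((g ^ n) ^ (q ^ t) : Mˣ) : M) := by push_cast; ring
          _ = ((g ^ n : Mˣ) : M) := by rw [h2]
      · rintro ⟨c, hc⟩
        have hc0 : c ≠ 0 := by
          rintro rfl
          rw [map_zero] at hc
          exact Units.ne_zero _ hc.symm
        have h3 : ((g ^ n : Mˣ) : M) ^ (q - 1) = 1 := by
          rw [← hc, ← map_pow, FiniteField.pow_card_sub_one_eq_one c hc0, map_one]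
        have h4 : (g ^ n) ^ (q - 1) = 1 := by
          apply Units.ext
          push_cast
          exact h3
        have h5 : orderOf (g ^ n) ∣ q - 1 := orderOf_dvd_of_pow_eq_one h4
        rw [hou] at h5
        have h6 : q ^ t - 1 ≤ q - 1 := Nat.le_of_dvd (by omega) h5
        have h7 : q ^ 1 < q ^ t := Nat.pow_lt_pow_right (by omega) ht
        simp only [pow_one] at h7
        omega
    have hρ0 : ρ ≠ 0 := by
      rintro rfl
      exact hρq ⟨0, by simp⟩
    -- key identity ρ^{q^j} = ρ^{q^i}
    have hst : ∀ m : ℕ, ρ ^ q ^ (m * t) = ρ := by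
      intro m
      induction m with
      | zero => simp
      | succ m ih =>
        have h : q ^ ((m + 1) * t) = q ^ (m * t) * q ^ t := by
          rw [← pow_add]; congr 1; ring
        rw [h, pow_mul, ih, hρt]
    have hρj : ρ ^ q ^ j = ρ ^ q ^ i := by
      have h : q ^ j = q ^ (s * t) * q ^ i := by
        rw [← pow_add, hj]; congr 1; ring
      rw [h, pow_mul, hst s]
    have hfρ : ∀ x : M, f (ρ * x) = ρ ^ q ^ i * f x := by
      intro x
      simp only [hf, mul_pow, hρj, mul_add]
      ring
    -- set λ := b / a
    set lam : M := b * a⁻¹ with hlam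
    have hba : b = lam * a := by rw [hlam, mul_assoc, inv_mul_cancel₀ ha, mul_one]
    have h0 : f (lam * a) = lam * f a := by
      rw [← hba]
      rw [hlam, show b * a⁻¹ * f a = (f a * b) * a⁻¹ by ring, hab, mul_assoc, mul_inv_cancel₀ ha, mul_one]
    have h1 : f (lam * (ρ * a)) = lam * f (ρ * a) := by
      have : lam * (ρ * a) = ρ * (lam * a) := by ring
      rw [this, hfρ, h0, hfρ]
      ring
    have hnp : ¬ (∃ c : K, ρ * a = algebraMap K M c * a ∨ a = algebraMap K M c * (ρ * a)) := by
      rintro ⟨c, hc | hc⟩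
      · exact hρq ⟨c, (mul_right_cancel₀ ha hc).symm⟩
      · have hc0 : c ≠ 0 := by
          rintro rfl
          rw [map_zero, zero_mul] at hc
          exact ha hc
        apply hρq
        refine ⟨c⁻¹, ?_⟩
        have h2 := hc
        rw [← mul_assoc] at h2
        nth_rewrite 1 [← one_mul a] at h2
        have h3 : algebraMap K M c * ρ = 1 := (mul_right_cancel₀ ha h2).symm
        rw [map_inv₀]
        exact inv_eq_of_mul_eq_one_left (by linear_combination h3)
    have hmem : lam ∈ Set.range (algebraMap K M) := by
      rw [← hS a (ρ * a) hnp]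
      exact ⟨h0, h1⟩
    obtain ⟨c, hc⟩ := hmem
    exact ⟨c, by rw [hc, hba]⟩
  · -- scattered ⇒ Sidon
    intro hSc x₀ x₁ hnp
    have hx₀ : x₀ ≠ 0 := by
      rintro rfl
      exact hnp ⟨0, Or.inr (by simp)⟩
    ext lam
    constructor
    · rintro ⟨h0, _⟩
      simp only [Set.mem_setOf_eq] at h0
      by_cases hlam : lam = 0
      · exact ⟨0, by simp [hlam]⟩
      · obtain ⟨c, hc⟩ := hSc x₀ (lam * x₀) hx₀ (mul_ne_zero hlam hx₀)
          (by rw [h0]; ring)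
        exact ⟨c, (mul_right_cancel₀ hx₀ hc).symm⟩
    · rintro ⟨c, rfl⟩
      exact ⟨hlin c x₀, hlin c x₁⟩
end

section
/- Let f(x) = x^{q^i} + δ x^{q^{i+st}} over F_{q^k} with δ ≠ 0, t | k, t > 1, gcd(s,k)=1. If N_{q^k/q^t}(δ) = (-1)^{k/t}, then ker(f) = x_0 F_{q^t} for some x_0 ∈ F_{q^k}^*, and hence f is not a Sidon space polynomial (its kernel contains a full F_{q^t}-line, so it fails the property that ker(f) is a Sidon space). -/
lemma aux_geom (Q : ℕ) (hQ : 1 ≤ Q) (m : ℕ) :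
    Q ^ m - 1 = (Q - 1) * ∑ j ∈ Finset.range m, Q ^ j := by
  induction m with
  | zero => simp
  | succ m ih =>
    have h1 : 1 ≤ Q ^ m := Nat.one_le_pow _ _ (by omega)
    have h2 : Q ^ m ≤ Q ^ (m + 1) := Nat.pow_le_pow_right (by omega) (Nat.le_succ m)
    have e1 : (Q - 1) * Q ^ m = Q ^ (m + 1) - Q ^ m := by
      rw [Nat.sub_mul, one_mul, ← pow_succ']
    rw [Finset.sum_range_succ, Nat.mul_add, ← ih, e1]
    omega

lemma aux_parity (Q : ℕ) (hQ : Odd Q) (m : ℕ) :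
    (∑ j ∈ Finset.range m, Q ^ j) % 2 = m % 2 := by
  induction m with
  | zero => simp
  | succ m ih =>
    have h3 : Odd (Q ^ m) := hQ.pow
    rw [Nat.odd_iff] at h3
    rw [Finset.sum_range_succ]
    omega

lemma aux_subdvd (q a b : ℕ) (h : a ∣ b) : q ^ a - 1 ∣ q ^ b - 1 := by
  obtain ⟨c, rfl⟩ := h
  have := Nat.sub_dvd_pow_sub_pow (q ^ a) 1 c
  rwa [one_pow, ← pow_mul] at this

lemma aux_gcd_dvd (q a b : ℕ) (hq : 1 ≤ q) :
    Nat.gcd (q ^ a - 1) (q ^ b - 1) ∣ q ^ Nat.gcd a b - 1 := by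
  set D := Nat.gcd (q ^ a - 1) (q ^ b - 1) with hD
  have h1 : (1:ℕ) ≡ q ^ a [MOD D] :=
    (Nat.modEq_iff_dvd' (Nat.one_le_pow _ _ (by omega))).mpr (Nat.gcd_dvd_left _ _)
  have h2 : (1:ℕ) ≡ q ^ b [MOD D] :=
    (Nat.modEq_iff_dvd' (Nat.one_le_pow _ _ (by omega))).mpr (Nat.gcd_dvd_right _ _)
  have c1 : ((q : ZMod D)) ^ a = 1 := by
    have := (ZMod.natCast_eq_natCast_iff _ _ _).mpr h1.symm
    push_cast at this; exact this
  have c2 : ((q : ZMod D)) ^ b = 1 := by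
    have := (ZMod.natCast_eq_natCast_iff _ _ _).mpr h2.symm
    push_cast at this; exact this
  have c3 : ((q : ZMod D)) ^ Nat.gcd a b = 1 := pow_gcd_eq_one.mpr ⟨c1, c2⟩
  have h3 : (1:ℕ) ≡ q ^ Nat.gcd a b [MOD D] :=
    ((ZMod.natCast_eq_natCast_iff (q ^ Nat.gcd a b) 1 D).mp (by push_cast; exact c3)).symm
  exact (Nat.modEq_iff_dvd' (Nat.one_le_pow _ _ (by omega))).mp h3

lemma aux_exists_pow {G : Type*} [Group G] [Fintype G] [IsCyclic G] (n : ℕ) (a : G)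
    (h : a ^ (Fintype.card G / Nat.gcd n (Fintype.card G)) = 1) : ∃ x : G, x ^ n = a := by
  obtain ⟨g, hg⟩ := IsCyclic.exists_generator (α := G)
  have hord : orderOf g = Fintype.card G :=
    (orderOf_eq_card_of_forall_mem_zpowers hg).trans (Nat.card_eq_fintype_card)
  set N := Fintype.card G with hN
  set d := Nat.gcd n N with hd
  set e := N / d with he
  have hNpos : 0 < N := Fintype.card_pos
  have hdN : d ∣ N := Nat.gcd_dvd_right _ _
  have hdpos : 0 < d := Nat.pos_of_dvd_of_pos hdN hNpos
  have hepos : 0 < e := Nat.div_pos (Nat.le_of_dvd hNpos hdN) hdpos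
  have hde : d * e = N := Nat.mul_div_cancel' hdN
  obtain ⟨j, hj⟩ := Subgroup.mem_zpowers_iff.mp (hg a)
  have h1 : g ^ (j * (e : ℤ)) = 1 := by rw [zpow_mul, hj, zpow_natCast, h]
  have h2 : (N : ℤ) ∣ j * e := by rw [← hord]; exact orderOf_dvd_iff_zpow_eq_one.mpr h1
  have h3 : (d : ℤ) ∣ j := by
    have h4 : (d : ℤ) * e ∣ j * e := by
      rw [show ((d:ℤ) * e = (N:ℤ)) from by exact_mod_cast hde]
      exact h2
    exact (mul_dvd_mul_iff_right (by exact_mod_cast hepos.ne' : (e:ℤ) ≠ 0)).mp h4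
  obtain ⟨w, hw⟩ := h3
  have hgN : g ^ ((N : ℤ) * (Nat.gcdB n N * w)) = 1 :=
    orderOf_dvd_iff_zpow_eq_one.mp (by rw [hord]; exact Dvd.intro _ rfl)
  have key : (d : ℤ) = n * Nat.gcdA n N + N * Nat.gcdB n N := Nat.gcd_eq_gcd_ab n N
  refine ⟨g ^ (Nat.gcdA n N * w), ?_⟩
  have expand : a = g ^ ((n:ℤ) * (Nat.gcdA n N * w)) := by
    calc a = g ^ j := hj.symm
      _ = g ^ ((n:ℤ) * (Nat.gcdA n N * w) + (N:ℤ) * (Nat.gcdB n N * w)) := by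
          congr 1
          rw [hw, key]; ring
      _ = g ^ ((n:ℤ) * (Nat.gcdA n N * w)) * g ^ ((N:ℤ) * (Nat.gcdB n N * w)) := zpow_add g _ _
      _ = g ^ ((n:ℤ) * (Nat.gcdA n N * w)) := by rw [hgN, mul_one]
  rw [expand, ← zpow_natCast (g ^ (Nat.gcdA n N * w)) n, ← zpow_mul]
  congr 1
  ring

/-- if `N_{q^k/q^t}(δ) = (-1)^{k/t}` then `ker f = x₀ F_{q^t}` for some
`x₀ ≠ 0`, and `f(x) = x^{q^i} + δ x^{q^{i+st}}` is not a Sidon space polynomial. -/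
theorem stmt_12 {K M : Type*} [Field K] [Field M] [Algebra K M] [Fintype K] [Fintype M]
    (k : ℕ) (hk : Module.finrank K M = k)
    (δ : M) (hδ : δ ≠ 0) (i s t : ℕ) (hi : 1 ≤ i)
    (hs : Nat.gcd s k = 1) (ht : 1 < t) (htk : t ∣ k)
    (hnorm : δ ^ ((Fintype.card K ^ k - 1) / (Fintype.card K ^ t - 1)) = (-1 : M) ^ (k / t)) :
    (∃ x₀ : M, x₀ ≠ 0 ∧
      {x : M | x ^ Fintype.card K ^ i + δ * x ^ Fintype.card K ^ (i + s * t) = 0}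
        = {x : M | ∃ y : M, y ^ Fintype.card K ^ t = y ∧ x = x₀ * y}) ∧
    ¬ IsSidonPoly K
        (fun x : M => x ^ Fintype.card K ^ i + δ * x ^ Fintype.card K ^ (i + s * t)) := by
  classical
  set q := Fintype.card K with hqdef
  have hq : 2 ≤ q := Fintype.one_lt_card
  have hcard : Fintype.card M = q ^ k := by
    rw [← hk]; exact Module.card_eq_pow_finrank (K := K) (V := M)
  have hM2 : 2 ≤ Fintype.card M := Fintype.one_lt_card
  have hk1 : 1 ≤ k := by
    rcases Nat.eq_zero_or_pos k with h | h
    · rw [h, pow_zero] at hcard; omega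
    · exact h
  have htk' : t ≤ k := Nat.le_of_dvd (by omega) htk
  set n := q ^ i * (q ^ (s * t) - 1) with hn
  set N := q ^ k - 1 with hN
  set d := q ^ t - 1 with hd
  set m' := k / t with hm'
  set e := N / d with he_def
  have hqk1 : 2 ≤ q ^ k := le_trans hq (Nat.le_self_pow (by omega) q)
  have hqt1 : 2 ≤ q ^ t := le_trans hq (Nat.le_self_pow (by omega) q)
  have hqst1 : 1 ≤ q ^ (s * t) := Nat.one_le_pow _ _ (by omega)
  have hNpos : 0 < N := by omega
  have hdpos : 0 < d := by omega
  have hqi0 : q ^ i ≠ 0 := (Nat.pow_pos (by omega)).ne'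
  have hqist0 : q ^ (i + s * t) ≠ 0 := (Nat.pow_pos (by omega)).ne'
  have hqt0 : q ^ t ≠ 0 := (Nat.pow_pos (by omega)).ne'
  have hs1 : 1 ≤ s := by
    rcases Nat.eq_zero_or_pos s with h | h
    · rw [h, Nat.gcd_zero_left] at hs; omega
    · exact h
  -- gcd (s*t) k = t
  have hgk : Nat.gcd (s * t) k ∣ k := Nat.gcd_dvd_right _ _
  have hgcdst : Nat.gcd (s * t) k = t := by
    apply Nat.dvd_antisymm
    · have hcop : (Nat.gcd (s * t) k).Coprime s :=
        (Nat.Coprime.coprime_dvd_right hgk hs).symm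
      exact hcop.dvd_of_dvd_mul_left (Nat.gcd_dvd_left (s * t) k)
    · exact Nat.dvd_gcd (dvd_mul_left t s) htk
  -- coprimality of q^i with N
  have hqN : Nat.Coprime q N := by
    have h3 : Nat.gcd q N ∣ q ^ k := (Nat.gcd_dvd_left _ _).trans (dvd_pow_self q (by omega))
    have h4 : Nat.gcd q N ∣ q ^ k - N := Nat.dvd_sub h3 (Nat.gcd_dvd_right _ _)
    have h5 : q ^ k - N = 1 := by omega
    exact Nat.dvd_one.mp (h5 ▸ h4)
  have hco : Nat.Coprime (q ^ i) N := hqN.pow_left i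
  have hdd1 : d ∣ q ^ (s * t) - 1 := aux_subdvd q t (s * t) (dvd_mul_left t s)
  have hdd2 : d ∣ N := aux_subdvd q t k htk
  have hgcd : Nat.gcd n N = d := by
    rw [hn, hco.gcd_mul_left_cancel (q ^ (s * t) - 1)]
    refine Nat.dvd_antisymm ?_ (Nat.dvd_gcd hdd1 hdd2)
    have := aux_gcd_dvd q (s * t) k (by omega)
    rwa [hgcdst] at this
  have hde : d * e = N := Nat.mul_div_cancel' hdd2
  have hepos : 0 < e := Nat.div_pos (Nat.le_of_dvd hNpos hdd2) hdpos
  have hdn : d ∣ n := hdd1.trans (dvd_mul_left _ _)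
  have hqt_succ : q ^ t = d + 1 := by omega
  -- exponent arithmetic
  have hexp : q ^ i + n = q ^ (i + s * t) := by
    calc q ^ i + q ^ i * (q ^ (s * t) - 1) = q ^ i * (1 + (q ^ (s * t) - 1)) := by ring
      _ = q ^ i * q ^ (s * t) := by congr 1; omega
      _ = q ^ (i + s * t) := (pow_add q i (s * t)).symm
  have haux : ∀ x : M, x ^ q ^ i + δ * x ^ q ^ (i + s * t) = x ^ q ^ i * (1 + δ * x ^ n) := by
    intro x
    rw [← hexp, pow_add]
    ring
  -- (-1)^(e+m') = 1
  have hm : t * m' = k := Nat.mul_div_cancel' htk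
  have hQm : (q ^ t) ^ m' = q ^ k := by rw [← pow_mul, hm]
  have he_eq : e = ∑ j ∈ Finset.range m', (q ^ t) ^ j := by
    have hg := aux_geom (q ^ t) (by omega) m'
    rw [hQm] at hg
    rw [he_def, hN, hg, ← hd, Nat.mul_div_cancel_left _ hdpos]
  have hpow1 : ((-1 : M)) ^ (e + m') = 1 := by
    by_cases hone : (-1 : M) = 1
    · rw [hone, one_pow]
    · have hqodd : Odd q := by
        rw [Nat.odd_iff]
        by_contra hcon
        have h2q : 2 ∣ q := by omega
        have h2M : 2 ∣ q ^ k := h2q.trans (dvd_pow_self q (by omega))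
        have hMc : Fintype.card M % 2 = 0 := by rw [hcard]; omega
        have hchar : ringChar M = 2 := FiniteField.even_card_iff_char_two.mpr hMc
        haveI : CharP M 2 := hchar ▸ ringChar.charP M
        exact hone (CharTwo.neg_eq 1)
      have hpar : e % 2 = m' % 2 := by
        rw [he_eq]; exact aux_parity _ hqodd.pow m'
      have hev : Even (e + m') := by rw [Nat.even_iff]; omega
      exact hev.neg_one_pow
  have he1 : (-δ⁻¹ : M) ^ e = 1 := by
    calc (-δ⁻¹ : M) ^ e = (-1 : M) ^ e * (δ ^ e)⁻¹ := by
          rw [show (-δ⁻¹ : M) = (-1) * δ⁻¹ from by ring, mul_pow, inv_pow]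
      _ = (-1 : M) ^ e * (-1 : M) ^ m' := by rw [hnorm, ← inv_pow, inv_neg, inv_one]
      _ = 1 := by rw [← pow_add]; exact hpow1
  -- existence of x₀
  have hNM : Fintype.card Mˣ = N := by rw [Fintype.card_units, hcard]
  have hunit : (-δ⁻¹ : M) ≠ 0 := by simp [hδ]
  set a : Mˣ := Units.mk0 (-δ⁻¹) hunit with ha_def
  have ha : a ^ (Fintype.card Mˣ / Nat.gcd n (Fintype.card Mˣ)) = 1 := by
    rw [hNM, hgcd, ← he_def]
    exact Units.ext (by rw [Units.val_pow_eq_pow_val, Units.val_one, ha_def, Units.val_mk0]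
                        exact he1)
  obtain ⟨x, hx⟩ := aux_exists_pow n a ha
  set x₀ : M := (x : M) with hx₀_def
  have hx₀ : x₀ ≠ 0 := Units.ne_zero x
  have hx₀n : x₀ ^ n = -δ⁻¹ := by
    have h6 := congrArg Units.val hx
    rwa [Units.val_pow_eq_pow_val, ha_def, Units.val_mk0] at h6
  have hδx₀ : 1 + δ * x₀ ^ n = 0 := by
    rw [hx₀n]
    field_simp
    ring
  -- kernel equality
  have hker : {x : M | x ^ q ^ i + δ * x ^ q ^ (i + s * t) = 0}
      = {x : M | ∃ y : M, y ^ q ^ t = y ∧ x = x₀ * y} := by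
    ext x
    simp only [Set.mem_setOf_eq]
    constructor
    · intro hxk
      by_cases hx0 : x = 0
      · exact ⟨0, zero_pow hqt0, by rw [hx0, mul_zero]⟩
      · rw [haux x] at hxk
        have h5 : 1 + δ * x ^ n = 0 :=
          (mul_eq_zero.mp hxk).resolve_left (pow_ne_zero _ hx0)
        have h6 : δ * x ^ n = -1 := by linear_combination h5
        have hxn : x ^ n = -δ⁻¹ := by
          calc x ^ n = δ⁻¹ * (δ * x ^ n) := by field_simp
            _ = -δ⁻¹ := by rw [h6]; ring
        refine ⟨x₀⁻¹ * x, ?_, by rw [← mul_assoc, mul_inv_cancel₀ hx₀, one_mul]⟩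
        have hy0 : x₀⁻¹ * x ≠ 0 := mul_ne_zero (inv_ne_zero hx₀) hx0
        have hyn : (x₀⁻¹ * x) ^ n = 1 := by
          rw [mul_pow, inv_pow, hx₀n, hxn]
          exact inv_mul_cancel₀ hunit
        have hyN : (x₀⁻¹ * x) ^ N = 1 := by
          have h7 := FiniteField.pow_card_sub_one_eq_one (x₀⁻¹ * x) hy0
          rwa [hcard] at h7
        have hyd : (x₀⁻¹ * x) ^ d = 1 := by
          have h8 := pow_gcd_eq_one.mpr ⟨hyn, hyN⟩
          rwa [hgcd] at h8
        rw [hqt_succ, pow_succ, hyd, one_mul]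
    · rintro ⟨y, hy, rfl⟩
      by_cases hy0 : y = 0
      · rw [hy0, mul_zero, zero_pow hqi0, zero_pow hqist0, mul_zero, add_zero]
      · have hyd : y ^ d = 1 := by
          have h7 : y ^ d * y = 1 * y := by rw [one_mul, ← pow_succ, ← hqt_succ, hy]
          exact mul_right_cancel₀ hy0 h7
        have hyn : y ^ n = 1 := by
          obtain ⟨c, hc⟩ := hdn
          rw [hc, pow_mul, hyd, one_pow]
        rw [haux, mul_pow x₀ y n, hyn, mul_one, hδx₀, mul_zero]
  refine ⟨⟨x₀, hx₀, hker⟩, ?_⟩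
  -- Part 2
  intro hsid
  obtain ⟨g, hg⟩ := IsCyclic.exists_generator (α := Mˣ)
  have hordg : orderOf g = N := by
    rw [(orderOf_eq_card_of_forall_mem_zpowers hg).trans Nat.card_eq_fintype_card, hNM]
  set z : M := ((g ^ e : Mˣ) : M) with hz_def
  have hz0 : z ≠ 0 := Units.ne_zero _
  have he_dvdN : e ∣ N := ⟨d, by rw [← hde, mul_comm]⟩
  have hordz : orderOf (g ^ e) = d := by
    rw [orderOf_pow, hordg, Nat.gcd_comm, Nat.gcd_eq_left he_dvdN, ← hde,
      Nat.mul_div_cancel _ hepos]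
  have hzd : z ^ d = 1 := by
    have h9 := pow_orderOf_eq_one (g ^ e)
    rw [hordz] at h9
    have h10 := congrArg Units.val h9
    rwa [Units.val_pow_eq_pow_val, Units.val_one] at h10
  have hzq : z ^ q ^ t = z := by rw [hqt_succ, pow_succ, hzd, one_mul]
  have hznotin : z ∉ Set.range (algebraMap K M) := by
    rintro ⟨c, hc⟩
    have hc0 : c ≠ 0 := by rintro rfl; rw [map_zero] at hc; exact hz0 hc.symm
    have hzp : z ^ (q - 1) = 1 := by
      rw [← hc, ← map_pow, FiniteField.pow_card_sub_one_eq_one c hc0, map_one]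
    have hu : (g ^ e) ^ (q - 1) = 1 :=
      Units.ext (by rw [Units.val_pow_eq_pow_val, Units.val_one]; exact hzp)
    have h11 := orderOf_dvd_of_pow_eq_one hu
    rw [hordz] at h11
    have h12 : d ≤ q - 1 := Nat.le_of_dvd (by omega) h11
    have h13 : q < q ^ t := by
      calc q = q ^ 1 := (pow_one q).symm
        _ < q ^ t := Nat.pow_lt_pow_right (by omega) ht
    omega
  -- kernel memberships
  have f0 : ∀ u : M, u ^ q ^ t = u →
      (x₀ * u) ^ q ^ i + δ * (x₀ * u) ^ q ^ (i + s * t) = 0 := by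
    intro u hu
    have : x₀ * u ∈ {x : M | x ^ q ^ i + δ * x ^ q ^ (i + s * t) = 0} := by
      rw [hker]; exact ⟨u, hu, rfl⟩
    exact this
  have fx₀ : x₀ ^ q ^ i + δ * x₀ ^ q ^ (i + s * t) = 0 := by
    have h14 := f0 1 (one_pow _); rwa [mul_one] at h14
  have fx₁ : (x₀ * z) ^ q ^ i + δ * (x₀ * z) ^ q ^ (i + s * t) = 0 := f0 z hzq
  have fzx₀ : (z * x₀) ^ q ^ i + δ * (z * x₀) ^ q ^ (i + s * t) = 0 := by
    rw [mul_comm z x₀]; exact f0 z hzq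
  have hz2 : (z * z) ^ q ^ t = z * z := by rw [mul_pow, hzq]
  have fzx₁ : (z * (x₀ * z)) ^ q ^ i + δ * (z * (x₀ * z)) ^ q ^ (i + s * t) = 0 := by
    rw [show z * (x₀ * z) = x₀ * (z * z) from by ring]
    exact f0 (z * z) hz2
  -- non-proportionality
  have hnp : ¬ (∃ c : K, x₀ * z = algebraMap K M c * x₀ ∨ x₀ = algebraMap K M c * (x₀ * z)) := by
    rintro ⟨c, hc | hc⟩
    · apply hznotin
      refine ⟨c, ?_⟩
      have h15 : x₀ * z = x₀ * algebraMap K M c := by linear_combination hc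
      exact (mul_left_cancel₀ hx₀ h15).symm
    · apply hznotin
      have h15 : x₀ * 1 = x₀ * (algebraMap K M c * z) := by linear_combination hc
      have h16 : (1 : M) = algebraMap K M c * z := mul_left_cancel₀ hx₀ h15
      refine ⟨c⁻¹, ?_⟩
      rw [map_inv₀]
      exact (eq_inv_of_mul_eq_one_right h16.symm).symm
  have hEq := hsid x₀ (x₀ * z) hnp
  have hzmem : z ∈ ({l : M | (fun x : M => x ^ q ^ i + δ * x ^ q ^ (i + s * t)) (l * x₀)
        = l * (fun x : M => x ^ q ^ i + δ * x ^ q ^ (i + s * t)) x₀}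
      ∩ {l : M | (fun x : M => x ^ q ^ i + δ * x ^ q ^ (i + s * t)) (l * (x₀ * z))
        = l * (fun x : M => x ^ q ^ i + δ * x ^ q ^ (i + s * t)) (x₀ * z)}) := by
    constructor
    · show (z * x₀) ^ q ^ i + δ * (z * x₀) ^ q ^ (i + s * t)
        = z * (x₀ ^ q ^ i + δ * x₀ ^ q ^ (i + s * t))
      rw [fx₀, fzx₀, mul_zero]
    · show (z * (x₀ * z)) ^ q ^ i + δ * (z * (x₀ * z)) ^ q ^ (i + s * t)
        = z * ((x₀ * z) ^ q ^ i + δ * (x₀ * z) ^ q ^ (i + s * t))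
      rw [fx₁, fzx₁, mul_zero]
  rw [hEq] at hzmem
  exact hznotin hzmem
end

section
/- For gcd(s,k) = 1, the binomial f(x) = x^{q^s} + δ x^{q^{2s}} over F_{q^k} is a Sidon space polynomial. -/
/-! Write `σ x = x ^ q ^ s`, so that `f = σ + δ σ²`. The identity `f (λ x) = λ f x` reads
`(σ λ - λ) σ x + δ (σ² λ - λ) σ² x = 0`. If `σ λ ≠ λ`, eliminating between `x₀` and `x₁` gives
`σ (x₀ σ x₁) = σ (x₁ σ x₀)`, so `x₁ / x₀` is fixed by `σ`. Since `gcd (s, k) = 1`, an element fixed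
by `σ` is fixed by the `q`-Frobenius, which generates `Gal(F_{q^k}/F_q)`; hence it lies in `F_q`. -/

open Module Function

namespace FiniteField

variable {K L : Type*} [Field K] [Fintype K] [Field L] [Algebra K L] [Finite L]

theorem mem_range_algebraMap_of_frobenius_fixed {x : L}
    (hx : frobeniusAlgEquivOfAlgebraic K L x = x) : x ∈ Set.range (algebraMap K L) := by
  refine IntermediateField.mem_bot.mp ((IsGalois.mem_bot_iff_fixed x).mpr fun σ ↦ ?_)
  obtain ⟨n, rfl⟩ := (bijective_frobeniusAlgEquivOfAlgebraic_pow K L).2 σ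
  rw [AlgEquiv.coe_pow]
  exact iterate_fixed hx _

theorem frobenius_fixed_of_frobenius_pow_fixed {s : ℕ} (hs : s.Coprime (finrank K L)) {x : L}
    (hx : (frobeniusAlgEquivOfAlgebraic K L ^ s) x = x) :
    frobeniusAlgEquivOfAlgebraic K L x = x := by
  have hperiod_s : IsPeriodicPt (frobeniusAlgEquivOfAlgebraic K L) s x := by
    rwa [IsPeriodicPt, IsFixedPt, ← AlgEquiv.coe_pow]
  have hperiod_k : IsPeriodicPt (frobeniusAlgEquivOfAlgebraic K L) (finrank K L) x := by
    rw [IsPeriodicPt, IsFixedPt, ← AlgEquiv.coe_pow, ← orderOf_frobeniusAlgEquivOfAlgebraic,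
      pow_orderOf_eq_one, AlgEquiv.one_apply]
  simpa only [hs.gcd_eq_one, IsPeriodicPt, IsFixedPt, iterate_one] using hperiod_s.gcd hperiod_k

end FiniteField

theorem RingHom.eq_self_or_div_eq_self_of_binomial_mul_eq {L : Type*} [Field L]
    (σ : L →+* L) (δ : L) {x₀ x₁ l : L} (hx₀ : x₀ ≠ 0)
    (h₀ : σ (l * x₀) + δ * σ (σ (l * x₀)) = l * (σ x₀ + δ * σ (σ x₀)))
    (h₁ : σ (l * x₁) + δ * σ (σ (l * x₁)) = l * (σ x₁ + δ * σ (σ x₁))) :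
    σ l = l ∨ σ (x₁ / x₀) = x₁ / x₀ := by
  simp only [map_mul] at h₀ h₁
  by_cases hl : σ l = l
  · exact Or.inl hl
  right
  have hcross : σ (x₀ * σ x₁) = σ (x₁ * σ x₀) := by
    refine mul_left_cancel₀ (sub_ne_zero.mpr hl) ?_
    simp only [map_mul]
    linear_combination σ (σ x₁) * h₀ - σ (σ x₀) * h₁
  rw [map_div₀, div_eq_div_iff (by simpa using hx₀) hx₀]
  linear_combination σ.injective hcross

theorem stmt_13_general {K M : Type*} [Field K] [Field M] [Algebra K M] [Fintype K] [Fintype M]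
    (k : ℕ) (hk : Module.finrank K M = k)
    (δ : M) (s : ℕ) (hs : Nat.gcd s k = 1) :
    IsSidonPoly K
      (fun x : M => x ^ Fintype.card K ^ s + δ * x ^ Fintype.card K ^ (2 * s)) := by
  set σ := FiniteField.frobeniusAlgEquivOfAlgebraic K M ^ s
  have hσ (x : M) : σ x = x ^ Fintype.card K ^ s := by
    rw [AlgEquiv.coe_pow, FiniteField.coe_frobeniusAlgEquivOfAlgebraic_iterate]
  have hσσ (x : M) : σ (σ x) = x ^ Fintype.card K ^ (2 * s) := by
    rw [hσ, hσ, ← pow_mul, two_mul, pow_add]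
  have hfixed {x : M} (hx : σ x = x) : x ∈ Set.range (algebraMap K M) :=
    FiniteField.mem_range_algebraMap_of_frobenius_fixed <|
      FiniteField.frobenius_fixed_of_frobenius_pow_fixed (hk ▸ hs) hx
  intro x₀ x₁ hprop
  have hx₀ : x₀ ≠ 0 := by
    rintro rfl
    exact hprop ⟨0, Or.inr (by simp)⟩
  ext l
  simp only [Set.mem_inter_iff, Set.mem_ofPred_eq, ← hσ, ← hσσ]
  constructor
  · rintro ⟨h₀, h₁⟩
    rcases (σ : M →+* M).eq_self_or_div_eq_self_of_binomial_mul_eq δ hx₀ h₀ h₁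
      with hl | hdiv
    · exact hfixed hl
    · obtain ⟨c, hc⟩ := hfixed hdiv
      exact absurd ⟨c, Or.inl (by rw [hc, div_mul_cancel₀ _ hx₀])⟩ hprop
  · rintro ⟨c, rfl⟩
    simp only [map_mul, AlgEquiv.commutes]
    constructor <;> ring

/-- for `gcd(s,k)=1`, `f(x) = x^{q^s} + δ x^{q^{2s}}` is a Sidon space
polynomial. -/
theorem stmt_13 {K M : Type*} [Field K] [Field M] [Algebra K M] [Fintype K] [Fintype M]
    (k : ℕ) (hk : Module.finrank K M = k)
    (δ : M) (s : ℕ) (hs : Nat.gcd s k = 1) (hs0 : 1 ≤ s) :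
    IsSidonPoly K
      (fun x : M => x ^ Fintype.card K ^ s + δ * x ^ Fintype.card K ^ (2 * s)) :=
  stmt_13_general k hk δ s hs
end

section
/- Let V_1, V_2 be distinct Sidon spaces in F_{q^n} of dimensions k_1, k_2 with dim_{F_q}(V_1 ∩ αV_2) ≤ 1 for every α ∈ F_{q^n}^*. Let m be a multiple of n with m/n > 2 and let δ be a root of an irreducible polynomial of degree m/n over F_{q^n}. Then V = {v_1 + δ v_2 : v_1 ∈ V_1, v_2 ∈ V_2} is a Sidon space of dimension k_1 + k_2 in F_{q^m}. -/
section aux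
variable {K L : Type*} [Field K] [Field L] [Algebra K L]

lemma qcoset_eq_of {a c : L} {x : K} (hx : x ≠ 0) (h : a = algebraMap K L x * c) :
    qcoset K a = qcoset K c := by
  ext y
  constructor
  · rintro ⟨t, rfl⟩
    exact ⟨t * x, by simp only [map_mul]; rw [h]; ring⟩
  · rintro ⟨t, rfl⟩
    refine ⟨t * x⁻¹, ?_⟩
    simp only [map_mul, map_inv₀]
    rw [h]
    have hx' : (algebraMap K L) x ≠ 0 := by
      simpa using (map_ne_zero_iff _ (algebraMap K L).injective).mpr hx
    field_simp

lemma qcoset_scalar {a c : L} (h : qcoset K a = qcoset K c) :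
    ∃ x : K, a = algebraMap K L x * c := by
  have : a ∈ qcoset K c := h ▸ ⟨1, by simp⟩
  obtain ⟨x, hx⟩ := this
  exact ⟨x, hx.symm⟩

lemma pair_eq_cases {α : Type*} {A B C D : α} (h : ({A, B} : Set α) = {C, D}) :
    (A = C ∧ B = D) ∨ (A = D ∧ B = C) :=
  Set.pair_eq_pair_iff.mp h

lemma prop_of_rank_le_one [FiniteDimensional K L] {p : Submodule K L}
    (h : Module.finrank K p ≤ 1) {a b : L} (ha : a ∈ p) (hb : b ∈ p) (hb0 : b ≠ 0) :
    ∃ x : K, a = algebraMap K L x * b := by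
  have hsp : (Submodule.span K {b}) ≤ p := by
    rw [Submodule.span_le]; simpa using hb
  have h1 : Module.finrank K (Submodule.span K ({b} : Set L)) = 1 :=
    finrank_span_singleton hb0
  have : p = Submodule.span K {b} :=
    (Submodule.eq_of_le_of_finrank_le hsp (by omega)).symm
  rw [this] at ha
  obtain ⟨x, hx⟩ := Submodule.mem_span_singleton.mp ha
  exact ⟨x, by rw [← hx, Algebra.smul_def]⟩

end aux

section core
variable {K L : Type*} [Field K] [Field L] [Algebra K L]

/-- Conclusion shape of the Sidon argument: each of `(u₁,u₂)`, `(v₁,v₂)` is a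
`K`-multiple of `(w₁,w₂)`/`(z₁,z₂)` in one of the two matchings. -/
def SidonConcl (K : Type*) {L : Type*} [Field K] [Field L] [Algebra K L]
    (u₁ u₂ v₁ v₂ w₁ w₂ z₁ z₂ : L) : Prop :=
  (∃ x y : K, u₁ = algebraMap K L x * w₁ ∧ u₂ = algebraMap K L x * w₂ ∧
      v₁ = algebraMap K L y * z₁ ∧ v₂ = algebraMap K L y * z₂) ∨
  (∃ x y : K, u₁ = algebraMap K L x * z₁ ∧ u₂ = algebraMap K L x * z₂ ∧
      v₁ = algebraMap K L y * w₁ ∧ v₂ = algebraMap K L y * w₂)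

lemma SidonConcl.swap_uv {u₁ u₂ v₁ v₂ w₁ w₂ z₁ z₂ : L}
    (h : SidonConcl K u₁ u₂ v₁ v₂ w₁ w₂ z₁ z₂) :
    SidonConcl K v₁ v₂ u₁ u₂ w₁ w₂ z₁ z₂ := by
  rcases h with ⟨x, y, h1, h2, h3, h4⟩ | ⟨x, y, h1, h2, h3, h4⟩
  · exact Or.inr ⟨y, x, h3, h4, h1, h2⟩
  · exact Or.inl ⟨y, x, h3, h4, h1, h2⟩

lemma SidonConcl.swap_wz {u₁ u₂ v₁ v₂ w₁ w₂ z₁ z₂ : L}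
    (h : SidonConcl K u₁ u₂ v₁ v₂ w₁ w₂ z₁ z₂) :
    SidonConcl K u₁ u₂ v₁ v₂ z₁ z₂ w₁ w₂ := h.symm

lemma scalar_inv_rel {x : K} (hx : x ≠ 0) {a b : L} (h : a = algebraMap K L x * b) :
    b = algebraMap K L x⁻¹ * a := by
  have hx' : (algebraMap K L) x ≠ 0 := (map_ne_zero_iff _ (algebraMap K L).injective).mpr hx
  rw [h, map_inv₀]
  field_simp

end core

section subs
variable {K L : Type*} [Field K] [Field L] [Algebra K L] [FiniteDimensional K L]
  {V₁ V₂ : Submodule K L}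

lemma subA (h1 : IsSidonSet K (V₁ : Set L))
    (hint : ∀ α : L, α ≠ 0 →
      Module.finrank K ↥(V₁ ⊓ V₂.map (LinearMap.mulLeft K α)) ≤ 1)
    {u₁ v₁ w₁ z₁ v₂ z₂ : L}
    (hu₁ : u₁ ∈ V₁) (hv₁ : v₁ ∈ V₁) (hw₁ : w₁ ∈ V₁) (hz₁ : z₁ ∈ V₁)
    (hv₂ : v₂ ∈ V₂) (hz₂ : z₂ ∈ V₂)
    (hu₁0 : u₁ ≠ 0) (hw₁0 : w₁ ≠ 0)
    (hb : ¬(v₁ = 0 ∧ v₂ = 0)) (hd : ¬(z₁ = 0 ∧ z₂ = 0))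
    (E1 : u₁ * v₁ = w₁ * z₁) (E2 : u₁ * v₂ = w₁ * z₂) :
    SidonConcl K u₁ 0 v₁ v₂ w₁ 0 z₁ z₂ := by
  by_cases hv₂0 : v₂ = 0
  · have hz₂0 : z₂ = 0 := by
      have : w₁ * z₂ = 0 := by rw [← E2, hv₂0, mul_zero]
      rcases mul_eq_zero.mp this with h | h
      · exact absurd h hw₁0
      · exact h
    have hv₁0 : v₁ ≠ 0 := fun h => hb ⟨h, hv₂0⟩
    have hz₁0 : z₁ ≠ 0 := fun h => hd ⟨h, hz₂0⟩
    have hp := h1 u₁ hu₁ v₁ hv₁ w₁ hw₁ z₁ hz₁ hu₁0 hv₁0 hw₁0 hz₁0 E1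
    rcases pair_eq_cases hp with ⟨hA, hB⟩ | ⟨hA, hB⟩
    · obtain ⟨x, hx⟩ := qcoset_scalar hA
      obtain ⟨y, hy⟩ := qcoset_scalar hB
      exact Or.inl ⟨x, y, hx, by simp, hy, by simp [hv₂0, hz₂0]⟩
    · obtain ⟨x, hx⟩ := qcoset_scalar hA
      obtain ⟨y, hy⟩ := qcoset_scalar hB
      exact Or.inr ⟨x, y, hx, by simp [hz₂0], hy, by simp [hv₂0]⟩
  · have hz₂0 : z₂ ≠ 0 := by
      intro h
      rw [h, mul_zero] at E2
      rcases mul_eq_zero.mp E2 with h' | h'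
      · exact hu₁0 h'
      · exact hv₂0 h'
    have hα : u₁ * z₂⁻¹ ≠ 0 := mul_ne_zero hu₁0 (inv_ne_zero hz₂0)
    have hm1 : u₁ ∈ V₁ ⊓ V₂.map (LinearMap.mulLeft K (u₁ * z₂⁻¹)) := by
      refine ⟨hu₁, ⟨z₂, hz₂, ?_⟩⟩
      simp only [LinearMap.mulLeft_apply]
      field_simp
    have hm2 : w₁ ∈ V₁ ⊓ V₂.map (LinearMap.mulLeft K (u₁ * z₂⁻¹)) := by
      refine ⟨hw₁, ⟨v₂, hv₂, ?_⟩⟩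
      simp only [LinearMap.mulLeft_apply]
      field_simp
      linear_combination E2
    obtain ⟨x, hx⟩ := prop_of_rank_le_one (hint _ hα) hm2 hm1 hu₁0
    have hx0 : x ≠ 0 := by
      intro h
      rw [h, map_zero, zero_mul] at hx
      exact hw₁0 hx
    have hX0 : algebraMap K L x ≠ 0 := (map_ne_zero_iff _ (algebraMap K L).injective).mpr hx0
    have hvz2 : v₂ = algebraMap K L x * z₂ := by
      apply mul_left_cancel₀ hu₁0
      rw [E2, hx]; ring
    have hvz1 : v₁ = algebraMap K L x * z₁ := by
      apply mul_left_cancel₀ hu₁0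
      rw [E1, hx]; ring
    exact Or.inl ⟨x⁻¹, x, scalar_inv_rel hx0 hx, by simp, hvz1, hvz2⟩
lemma subB (h2 : IsSidonSet K (V₂ : Set L))
    (hint : ∀ α : L, α ≠ 0 →
      Module.finrank K ↥(V₁ ⊓ V₂.map (LinearMap.mulLeft K α)) ≤ 1)
    {v₁ z₁ u₂ v₂ w₂ z₂ : L}
    (hv₁ : v₁ ∈ V₁) (hz₁ : z₁ ∈ V₁)
    (hu₂ : u₂ ∈ V₂) (hv₂ : v₂ ∈ V₂) (hw₂ : w₂ ∈ V₂) (hz₂ : z₂ ∈ V₂)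
    (hu₂0 : u₂ ≠ 0) (hv₂0 : v₂ ≠ 0) (hw₂0 : w₂ ≠ 0) (hz₂0 : z₂ ≠ 0)
    (E2 : u₂ * v₁ = w₂ * z₁) (E3 : u₂ * v₂ = w₂ * z₂) :
    SidonConcl K 0 u₂ v₁ v₂ 0 w₂ z₁ z₂ := by
  by_cases hv₁0 : v₁ = 0
  · have hz₁0 : z₁ = 0 := by
      have : w₂ * z₁ = 0 := by rw [← E2, hv₁0, mul_zero]
      rcases mul_eq_zero.mp this with h | h
      · exact absurd h hw₂0
      · exact h
    have hp := h2 u₂ hu₂ v₂ hv₂ w₂ hw₂ z₂ hz₂ hu₂0 hv₂0 hw₂0 hz₂0 E3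
    rcases pair_eq_cases hp with ⟨hA, hB⟩ | ⟨hA, hB⟩
    · obtain ⟨x, hx⟩ := qcoset_scalar hA
      obtain ⟨y, hy⟩ := qcoset_scalar hB
      exact Or.inl ⟨x, y, by simp, hx, by simp [hv₁0, hz₁0], hy⟩
    · obtain ⟨x, hx⟩ := qcoset_scalar hA
      obtain ⟨y, hy⟩ := qcoset_scalar hB
      exact Or.inr ⟨x, y, by simp [hz₁0], hx, by simp [hv₁0], hy⟩
  · have hz₁0 : z₁ ≠ 0 := by
      intro h
      rw [h, mul_zero] at E2
      rcases mul_eq_zero.mp E2 with h' | h'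
      · exact hu₂0 h'
      · exact hv₁0 h'
    have hα : z₁ * u₂⁻¹ ≠ 0 := mul_ne_zero hz₁0 (inv_ne_zero hu₂0)
    have hm1 : z₁ ∈ V₁ ⊓ V₂.map (LinearMap.mulLeft K (z₁ * u₂⁻¹)) := by
      refine ⟨hz₁, ⟨u₂, hu₂, ?_⟩⟩
      simp only [LinearMap.mulLeft_apply]
      field_simp
    have hm2 : v₁ ∈ V₁ ⊓ V₂.map (LinearMap.mulLeft K (z₁ * u₂⁻¹)) := by
      refine ⟨hv₁, ⟨w₂, hw₂, ?_⟩⟩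
      simp only [LinearMap.mulLeft_apply]
      field_simp
      linear_combination -E2
    obtain ⟨x, hx⟩ := prop_of_rank_le_one (hint _ hα) hm2 hm1 hz₁0
    have hx0 : x ≠ 0 := by
      intro h
      rw [h, map_zero, zero_mul] at hx
      exact hv₁0 hx
    have hwu : w₂ = algebraMap K L x * u₂ := by
      apply mul_right_cancel₀ hz₁0
      rw [← E2, hx]; ring
    have hvz2 : v₂ = algebraMap K L x * z₂ := by
      apply mul_left_cancel₀ hu₂0
      rw [E3, hwu]; ring
    exact Or.inl ⟨x⁻¹, x, by simp, scalar_inv_rel hx0 hwu, hx, hvz2⟩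

lemma subC (h2 : IsSidonSet K (V₂ : Set L))
    (hint : ∀ α : L, α ≠ 0 →
      Module.finrank K ↥(V₁ ⊓ V₂.map (LinearMap.mulLeft K α)) ≤ 1)
    {u₁ u₂ v₁ v₂ w₁ w₂ z₁ z₂ : L} {a b : K}
    (hw₁ : w₁ ∈ V₁) (hz₁ : z₁ ∈ V₁)
    (hu₂ : u₂ ∈ V₂) (hv₂ : v₂ ∈ V₂) (hw₂ : w₂ ∈ V₂) (hz₂ : z₂ ∈ V₂)
    (hu₁0 : u₁ ≠ 0) (hv₁0 : v₁ ≠ 0) (hw₁0 : w₁ ≠ 0) (hz₁0 : z₁ ≠ 0)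
    (hu₂0 : u₂ ≠ 0) (hv₂0 : v₂ ≠ 0) (hw₂0 : w₂ ≠ 0) (hz₂0 : z₂ ≠ 0)
    (hu1 : u₁ = algebraMap K L a * w₁) (hv1 : v₁ = algebraMap K L b * z₁)
    (E1 : u₁ * v₁ = w₁ * z₁) (E2 : u₁ * v₂ + u₂ * v₁ = w₁ * z₂ + w₂ * z₁)
    (E3 : u₂ * v₂ = w₂ * z₂) :
    SidonConcl K u₁ u₂ v₁ v₂ w₁ w₂ z₁ z₂ := by
  set A := algebraMap K L a with hA
  set B := algebraMap K L b with hB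
  have hA0 : A ≠ 0 := fun h => hu₁0 (by rw [hu1, h, zero_mul])
  have hB0 : B ≠ 0 := fun h => hv₁0 (by rw [hv1, h, zero_mul])
  have ha0 : a ≠ 0 := fun h => hA0 (by rw [hA, h, map_zero])
  have hAB : A * B = 1 := by
    apply mul_right_cancel₀ (mul_ne_zero hw₁0 hz₁0)
    rw [hu1, hv1] at E1
    linear_combination E1
  rcases pair_eq_cases (h2 u₂ hu₂ v₂ hv₂ w₂ hw₂ z₂ hz₂ hu₂0 hv₂0 hw₂0 hz₂0 E3)
    with ⟨hA2, hB2⟩ | ⟨hA2, hB2⟩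
  · obtain ⟨c, hc⟩ := qcoset_scalar hA2
    obtain ⟨d, hd⟩ := qcoset_scalar hB2
    set C := algebraMap K L c with hCd
    set D := algebraMap K L d with hDd
    have hC0 : C ≠ 0 := fun h => hu₂0 (by rw [hc, h, zero_mul])
    have hD0 : D ≠ 0 := fun h => hv₂0 (by rw [hd, h, zero_mul])
    have hCD : C * D = 1 := by
      apply mul_right_cancel₀ (mul_ne_zero hw₂0 hz₂0)
      rw [hc, hd] at E3
      linear_combination E3
    by_cases hac : A = C
    · have hbd : B = D := by
        apply mul_left_cancel₀ hA0
        rw [hAB]; rw [hac, hCD]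
      exact Or.inl ⟨a, b, hu1, by rw [hc, ← hA, hac], hv1, by rw [hd, ← hB, hbd]⟩
    · rw [hu1, hv1, hc, hd] at E2
      have hkey : (A - C) * (A * (w₁ * z₂)) = (A - C) * (C * (w₂ * z₁)) := by
        linear_combination (A * C) * E2 - (A ^ 2 * (w₁ * z₂)) * hCD -
          (C ^ 2 * (w₂ * z₁)) * hAB
      have hkey2 : A * (w₁ * z₂) = C * (w₂ * z₁) :=
        mul_left_cancel₀ (sub_ne_zero.mpr hac) hkey
      have hα : z₁ * z₂⁻¹ ≠ 0 := mul_ne_zero hz₁0 (inv_ne_zero hz₂0)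
      have hm1 : z₁ ∈ V₁ ⊓ V₂.map (LinearMap.mulLeft K (z₁ * z₂⁻¹)) := by
        refine ⟨hz₁, ⟨z₂, hz₂, ?_⟩⟩
        simp only [LinearMap.mulLeft_apply]
        field_simp
      have hm2 : w₁ ∈ V₁ ⊓ V₂.map (LinearMap.mulLeft K (z₁ * z₂⁻¹)) := by
        refine ⟨hw₁, ⟨(c * a⁻¹) • w₂, V₂.smul_mem _ hw₂, ?_⟩⟩
        simp only [LinearMap.mulLeft_apply, Algebra.smul_def, map_mul, map_inv₀]
        rw [← hCd, ← hA]
        field_simp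
        linear_combination -hkey2
      obtain ⟨m, hm⟩ := prop_of_rank_le_one (hint _ hα) hm2 hm1 hz₁0
      set M := algebraMap K L m with hM
      have hM0 : M ≠ 0 := fun h => hw₁0 (by rw [hm, h, zero_mul])
      have hm0 : m ≠ 0 := fun h => hM0 (by rw [hM, h, map_zero])
      rw [hm] at hkey2
      have hw2 : C * w₂ = A * M * z₂ := by
        apply mul_right_cancel₀ hz₁0
        linear_combination -hkey2
      have h3 : algebraMap K L (a * m) * v₁ = w₁ := by
        rw [map_mul, ← hA, ← hM, hv1, hm]
        linear_combination (M * z₁) * hAB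
      have h4 : algebraMap K L (a * m) * v₂ = w₂ := by
        rw [map_mul, ← hA, ← hM, hd]
        linear_combination (-D) * hw2 + w₂ * hCD
      refine Or.inr ⟨a * m, (a * m)⁻¹, ?_, ?_, ?_, ?_⟩
      · rw [map_mul, ← hA, ← hM, hu1, hm]; ring
      · rw [map_mul, ← hA, ← hM, hc]
        linear_combination hw2
      · exact scalar_inv_rel (mul_ne_zero ha0 hm0) h3.symm
      · exact scalar_inv_rel (mul_ne_zero ha0 hm0) h4.symm
  · obtain ⟨c, hc⟩ := qcoset_scalar hA2
    obtain ⟨d, hd⟩ := qcoset_scalar hB2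
    set C := algebraMap K L c with hCd
    set D := algebraMap K L d with hDd
    have hC0 : C ≠ 0 := fun h => hu₂0 (by rw [hc, h, zero_mul])
    have hc0 : c ≠ 0 := fun h => hC0 (by rw [hCd, h, map_zero])
    have hCD : C * D = 1 := by
      apply mul_right_cancel₀ (mul_ne_zero hw₂0 hz₂0)
      rw [hc, hd] at E3
      linear_combination E3
    rw [hu1, hv1, hc, hd] at E2
    have hfac : (A * w₁ - C * z₁) * (A * w₂ - C * z₂) = 0 := by
      linear_combination (A * C) * E2 - (A ^ 2 * (w₁ * w₂)) * hCD -
        (C ^ 2 * (z₁ * z₂)) * hAB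
    rcases mul_eq_zero.mp hfac with h0 | h0
    · have he : A * w₁ = C * z₁ := sub_eq_zero.mp h0
      have h3 : C * v₁ = w₁ := by
        rw [hv1]
        linear_combination (-B) * he + w₁ * hAB
      have h4 : C * v₂ = w₂ := by
        rw [hd]
        linear_combination w₂ * hCD
      refine Or.inr ⟨c, c⁻¹, ?_, ?_, ?_, ?_⟩
      · rw [hu1]; exact he
      · exact hc
      · exact scalar_inv_rel hc0 h3.symm
      · exact scalar_inv_rel hc0 h4.symm
    · have he : A * w₂ = C * z₂ := sub_eq_zero.mp h0
      refine Or.inl ⟨a, b, hu1, ?_, hv1, ?_⟩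
      · rw [hc, ← he]
      · rw [hd]
        apply mul_left_cancel₀ hA0
        linear_combination D * he + z₂ * hCD - z₂ * hAB
  
lemma core (h1 : IsSidonSet K (V₁ : Set L)) (h2 : IsSidonSet K (V₂ : Set L))
    (hint : ∀ α : L, α ≠ 0 →
      Module.finrank K ↥(V₁ ⊓ V₂.map (LinearMap.mulLeft K α)) ≤ 1)
    {u₁ u₂ v₁ v₂ w₁ w₂ z₁ z₂ : L}
    (hu₁ : u₁ ∈ V₁) (hv₁ : v₁ ∈ V₁) (hw₁ : w₁ ∈ V₁) (hz₁ : z₁ ∈ V₁)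
    (hu₂ : u₂ ∈ V₂) (hv₂ : v₂ ∈ V₂) (hw₂ : w₂ ∈ V₂) (hz₂ : z₂ ∈ V₂)
    (ha : ¬(u₁ = 0 ∧ u₂ = 0)) (hb : ¬(v₁ = 0 ∧ v₂ = 0))
    (hc : ¬(w₁ = 0 ∧ w₂ = 0)) (hd : ¬(z₁ = 0 ∧ z₂ = 0))
    (E1 : u₁ * v₁ = w₁ * z₁) (E2 : u₁ * v₂ + u₂ * v₁ = w₁ * z₂ + w₂ * z₁)
    (E3 : u₂ * v₂ = w₂ * z₂) :
    SidonConcl K u₁ u₂ v₁ v₂ w₁ w₂ z₁ z₂ := by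
  by_cases h22 : u₂ * v₂ = 0
  · have h22' : w₂ * z₂ = 0 := by rw [← E3]; exact h22
    rcases mul_eq_zero.mp h22 with hU | hV
    · rcases mul_eq_zero.mp h22' with hW | hZ
      · subst hU; subst hW
        have hu₁0 : u₁ ≠ 0 := fun h => ha ⟨h, rfl⟩
        have hw₁0 : w₁ ≠ 0 := fun h => hc ⟨h, rfl⟩
        exact subA h1 hint hu₁ hv₁ hw₁ hz₁ hv₂ hz₂ hu₁0 hw₁0 hb hd E1
          (by linear_combination E2)
      · subst hU; subst hZ
        have hu₁0 : u₁ ≠ 0 := fun h => ha ⟨h, rfl⟩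
        have hz₁0 : z₁ ≠ 0 := fun h => hd ⟨h, rfl⟩
        exact (subA h1 hint hu₁ hv₁ hz₁ hw₁ hv₂ hw₂ hu₁0 hz₁0 hb hc
          (by linear_combination E1) (by linear_combination E2)).swap_wz
    · rcases mul_eq_zero.mp h22' with hW | hZ
      · subst hV; subst hW
        have hv₁0 : v₁ ≠ 0 := fun h => hb ⟨h, rfl⟩
        have hw₁0 : w₁ ≠ 0 := fun h => hc ⟨h, rfl⟩
        exact (subA h1 hint hv₁ hu₁ hw₁ hz₁ hu₂ hz₂ hv₁0 hw₁0 ha hd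
          (by linear_combination E1) (by linear_combination E2)).swap_uv
      · subst hV; subst hZ
        have hv₁0 : v₁ ≠ 0 := fun h => hb ⟨h, rfl⟩
        have hz₁0 : z₁ ≠ 0 := fun h => hd ⟨h, rfl⟩
        exact (subA h1 hint hv₁ hu₁ hz₁ hw₁ hu₂ hw₂ hv₁0 hz₁0 ha hc
          (by linear_combination E1) (by linear_combination E2)).swap_uv.swap_wz
  · have hwz : w₂ * z₂ ≠ 0 := by rw [← E3]; exact h22
    have hu₂0 : u₂ ≠ 0 := left_ne_zero_of_mul h22
    have hv₂0 : v₂ ≠ 0 := right_ne_zero_of_mul h22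
    have hw₂0 : w₂ ≠ 0 := left_ne_zero_of_mul hwz
    have hz₂0 : z₂ ≠ 0 := right_ne_zero_of_mul hwz
    by_cases h11 : u₁ * v₁ = 0
    · have h11' : w₁ * z₁ = 0 := by rw [← E1]; exact h11
      rcases mul_eq_zero.mp h11 with hU | hV
      · rcases mul_eq_zero.mp h11' with hW | hZ
        · subst hU; subst hW
          exact subB h2 hint hv₁ hz₁ hu₂ hv₂ hw₂ hz₂ hu₂0 hv₂0 hw₂0 hz₂0
            (by linear_combination E2) E3
        · subst hU; subst hZ
          exact (subB h2 hint hv₁ hw₁ hu₂ hv₂ hz₂ hw₂ hu₂0 hv₂0 hz₂0 hw₂0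
            (by linear_combination E2) (by linear_combination E3)).swap_wz
      · rcases mul_eq_zero.mp h11' with hW | hZ
        · subst hV; subst hW
          exact (subB h2 hint hu₁ hz₁ hv₂ hu₂ hw₂ hz₂ hv₂0 hu₂0 hw₂0 hz₂0
            (by linear_combination E2) (by linear_combination E3)).swap_uv
        · subst hV; subst hZ
          exact (subB h2 hint hu₁ hw₁ hv₂ hu₂ hz₂ hw₂ hv₂0 hu₂0 hz₂0 hw₂0
            (by linear_combination E2) (by linear_combination E3)).swap_uv.swap_wz
    · have hwz1 : w₁ * z₁ ≠ 0 := by rw [← E1]; exact h11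
      have hu₁0 : u₁ ≠ 0 := left_ne_zero_of_mul h11
      have hv₁0 : v₁ ≠ 0 := right_ne_zero_of_mul h11
      have hw₁0 : w₁ ≠ 0 := left_ne_zero_of_mul hwz1
      have hz₁0 : z₁ ≠ 0 := right_ne_zero_of_mul hwz1
      rcases pair_eq_cases (h1 u₁ hu₁ v₁ hv₁ w₁ hw₁ z₁ hz₁ hu₁0 hv₁0 hw₁0 hz₁0 E1)
        with ⟨hP, hQ⟩ | ⟨hP, hQ⟩
      · obtain ⟨x, hx⟩ := qcoset_scalar hP
        obtain ⟨y, hy⟩ := qcoset_scalar hQ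
        exact subC h2 hint hw₁ hz₁ hu₂ hv₂ hw₂ hz₂ hu₁0 hv₁0 hw₁0 hz₁0
          hu₂0 hv₂0 hw₂0 hz₂0 hx hy E1 E2 E3
      · obtain ⟨x, hx⟩ := qcoset_scalar hP
        obtain ⟨y, hy⟩ := qcoset_scalar hQ
        exact (subC h2 hint hz₁ hw₁ hu₂ hv₂ hz₂ hw₂ hu₁0 hv₁0 hz₁0 hw₁0
          hu₂0 hv₂0 hz₂0 hw₂0 hx hy (by linear_combination E1)
          (by linear_combination E2) (by linear_combination E3)).swap_wz

end subs

section ext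
variable {L E : Type*} [Field L] [Field E] [Algebra L E] [Finite E]

lemma indep3_s15 {δ : E} (hδ : Algebra.adjoin L {δ} = ⊤) (hdeg : 2 < Module.finrank L E)
    (p q r : L)
    (h : algebraMap L E p + δ * algebraMap L E q + δ ^ 2 * algebraMap L E r = 0) :
    p = 0 ∧ q = 0 ∧ r = 0 := by
  have hit : IsIntegral L δ := IsIntegral.of_finite L δ
  have htop : IntermediateField.adjoin L {δ} = ⊤ :=
    IntermediateField.adjoin_eq_top_of_algebra L {δ} hδ
  have hdeg' : 2 < (minpoly L δ).natDegree := by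
    have h1 := IntermediateField.adjoin.finrank hit
    rw [htop, IntermediateField.finrank_top'] at h1
    omega
  have hli := linearIndependent_pow (K := L) δ
  have hli3 : LinearIndependent L fun i : Fin 3 => δ ^ (i : ℕ) := by
    have hinj : Function.Injective
        (fun i : Fin 3 => (⟨(i : ℕ), by omega⟩ : Fin (minpoly L δ).natDegree)) := by
      intro i j hij
      simpa [Fin.ext_iff] using hij
    exact hli.comp _ hinj
  have h0 := Fintype.linearIndependent_iff.mp hli3 ![p, q, r] ?_
  · exact ⟨h0 0, h0 1, h0 2⟩
  · rw [Fin.sum_univ_three]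
    simp only [Matrix.cons_val_zero, Matrix.cons_val_one, Matrix.head_cons,
      Matrix.cons_val_two, Matrix.tail_cons, Algebra.smul_def, Fin.isValue,
      Fin.val_zero, Fin.val_one, Fin.val_two, pow_zero, pow_one]
    linear_combination h

end ext

/-- direct sum of two Sidon spaces with mutual intersection condition,
placed in an extension of degree `> 2`, is a Sidon space of dimension `k₁ + k₂`. -/
theorem stmt_15 {K L E : Type*} [Field K] [Field L] [Field E]
    [Algebra K L] [Algebra L E] [Algebra K E] [IsScalarTower K L E]
    [Fintype K] [Fintype L] [Fintype E]
    (k₁ k₂ : ℕ) (V₁ V₂ : Submodule K L)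
    (h1 : IsSidonSet K (V₁ : Set L)) (h2 : IsSidonSet K (V₂ : Set L))
    (hne : V₁ ≠ V₂)
    (hd1 : Module.finrank K V₁ = k₁) (hd2 : Module.finrank K V₂ = k₂)
    (hint : ∀ α : L, α ≠ 0 →
      Module.finrank K ↥(V₁ ⊓ V₂.map (LinearMap.mulLeft K α)) ≤ 1)
    (δ : E) (hδ : Algebra.adjoin L {δ} = ⊤) (hdeg : 2 < Module.finrank L E) :
    IsSidonSet K {x : E | ∃ v₁ ∈ V₁, ∃ v₂ ∈ V₂,
        x = algebraMap L E v₁ + δ * algebraMap L E v₂} ∧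
    Module.finrank K ↥(Submodule.span K {x : E | ∃ v₁ ∈ V₁, ∃ v₂ ∈ V₂,
        x = algebraMap L E v₁ + δ * algebraMap L E v₂}) = k₁ + k₂ := by
  constructor
  · intro a ha b hb c hc d hd ha0 hb0 hc0 hd0 hab
    obtain ⟨u₁, hu₁, u₂, hu₂, rfl⟩ := ha
    obtain ⟨v₁, hv₁, v₂, hv₂, rfl⟩ := hb
    obtain ⟨w₁, hw₁, w₂, hw₂, rfl⟩ := hc
    obtain ⟨z₁, hz₁, z₂, hz₂, rfl⟩ := hd
    have key := indep3_s15 hδ hdeg (u₁ * v₁ - w₁ * z₁)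
      (u₁ * v₂ + u₂ * v₁ - (w₁ * z₂ + w₂ * z₁)) (u₂ * v₂ - w₂ * z₂) (by
        simp only [map_sub, map_add, map_mul]
        linear_combination hab)
    have E1 : u₁ * v₁ = w₁ * z₁ := sub_eq_zero.mp key.1
    have E2 : u₁ * v₂ + u₂ * v₁ = w₁ * z₂ + w₂ * z₁ := sub_eq_zero.mp key.2.1
    have E3 : u₂ * v₂ = w₂ * z₂ := sub_eq_zero.mp key.2.2
    have ha' : ¬(u₁ = 0 ∧ u₂ = 0) := fun ⟨hp, hq⟩ => ha0 (by simp [hp, hq])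
    have hb' : ¬(v₁ = 0 ∧ v₂ = 0) := fun ⟨hp, hq⟩ => hb0 (by simp [hp, hq])
    have hc' : ¬(w₁ = 0 ∧ w₂ = 0) := fun ⟨hp, hq⟩ => hc0 (by simp [hp, hq])
    have hd' : ¬(z₁ = 0 ∧ z₂ = 0) := fun ⟨hp, hq⟩ => hd0 (by simp [hp, hq])
    have hconv : ∀ (x : K) (p₁ p₂ q₁ q₂ : L),
        (algebraMap L E p₁ + δ * algebraMap L E p₂) ≠ 0 →
        p₁ = algebraMap K L x * q₁ → p₂ = algebraMap K L x * q₂ →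
        qcoset K (algebraMap L E p₁ + δ * algebraMap L E p₂)
          = qcoset K (algebraMap L E q₁ + δ * algebraMap L E q₂) := by
      intro x p₁ p₂ q₁ q₂ hp0 hp1 hp2
      have hx0 : x ≠ 0 := by
        intro h
        rw [h, map_zero, zero_mul] at hp1 hp2
        exact hp0 (by simp [hp1, hp2])
      refine qcoset_eq_of hx0 ?_
      rw [hp1, hp2, map_mul, map_mul, IsScalarTower.algebraMap_apply K L E]
      ring
    rcases core h1 h2 hint hu₁ hv₁ hw₁ hz₁ hu₂ hv₂ hw₂ hz₂ ha' hb' hc' hd' E1 E2 E3 with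
      ⟨x, y, hx1, hx2, hy1, hy2⟩ | ⟨x, y, hx1, hx2, hy1, hy2⟩
    · rw [hconv x _ _ _ _ ha0 hx1 hx2, hconv y _ _ _ _ hb0 hy1 hy2]
    · rw [hconv x _ _ _ _ ha0 hx1 hx2, hconv y _ _ _ _ hb0 hy1 hy2, Set.pair_comm]
  · have hδ0 : δ ≠ 0 := by
      intro h
      have := (indep3_s15 hδ hdeg 0 1 0 (by simp [h])).2.1
      simp at this
    set f : L →ₗ[K] E := (Algebra.linearMap L E).restrictScalars K with hf
    set g : L →ₗ[K] E := (LinearMap.mulLeft K δ).comp f with hg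
    have hfx : ∀ x : L, f x = algebraMap L E x := fun x => rfl
    have hgx : ∀ x : L, g x = δ * algebraMap L E x := fun x => rfl
    have hspan : Submodule.span K {x : E | ∃ v₁ ∈ V₁, ∃ v₂ ∈ V₂,
        x = algebraMap L E v₁ + δ * algebraMap L E v₂} = V₁.map f ⊔ V₂.map g := by
      apply le_antisymm
      · rw [Submodule.span_le]
        rintro x ⟨v₁, hv₁, v₂, hv₂, rfl⟩
        exact Submodule.add_mem _ (Submodule.mem_sup_left ⟨v₁, hv₁, rfl⟩)
          (Submodule.mem_sup_right ⟨v₂, hv₂, rfl⟩)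
      · apply sup_le
        · rintro x ⟨v₁, hv₁, rfl⟩
          exact Submodule.subset_span ⟨v₁, hv₁, 0, V₂.zero_mem, by simp [hfx]⟩
        · rintro x ⟨v₂, hv₂, rfl⟩
          exact Submodule.subset_span ⟨0, V₁.zero_mem, v₂, hv₂, by simp [hgx]⟩
    rw [hspan]
    have hfinj : Function.Injective f := fun x y hxy => (algebraMap L E).injective hxy
    have hginj : Function.Injective g := fun x y hxy => by
      apply hfinj
      exact mul_left_cancel₀ hδ0 hxy
    have hdisj : V₁.map f ⊓ V₂.map g = ⊥ := by
      rw [Submodule.eq_bot_iff]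
      rintro x hx
      rw [Submodule.mem_inf] at hx
      obtain ⟨⟨v₁, hv₁, rfl⟩, ⟨v₂, hv₂, heq⟩⟩ := hx
      rw [hfx, hgx] at heq
      have h0 := indep3_s15 hδ hdeg v₁ (-v₂) 0 (by
        simp only [map_neg, map_zero, mul_zero, add_zero, mul_neg]
        linear_combination -heq)
      rw [hfx, h0.1, map_zero]
    have hsum := Submodule.finrank_sup_add_finrank_inf_eq (V₁.map f) (V₂.map g)
    rw [hdisj, finrank_bot, add_zero] at hsum
    have e1 : Module.finrank K ↥(V₁.map f) = k₁ := by
      rw [← hd1]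
      exact (Submodule.equivMapOfInjective f hfinj V₁).symm.finrank_eq
    have e2 : Module.finrank K ↥(V₂.map g) = k₂ := by
      rw [← hd2]
      exact (Submodule.equivMapOfInjective g hginj V₂).symm.finrank_eq
    rw [hsum, e1, e2]
end

section
/- If V is an F_q-subspace of F_{q^n} (strictly F_q-linear, with some 1-dimensional intersection V ∩ αV for α ∉ F_q), and δ is a root of an irreducible polynomial of degree > 2 over F_{q^n}, then V + δV = {v_1 + δ v_2 : v_1, v_2 ∈ V} is not a Sidon space: there exists α ∈ F_{q^n} \ F_q with dim_{F_q}((V + δV) ∩ α(V + δV)) ≥ 2. -/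
/-!
Pick `t ∈ V` with `αt ∈ V`, `t ≠ 0`. Then `t, αt, δt, δαt` all lie in `W = V + δV`: the two
elements `αt, δαt` lie in `W ∩ αW`, and they are `F_q`-independent because `δ ∉ F_{q^n}`.
The same four elements violate the Sidon property through `t · δαt = δt · αt`.
-/

section Qcoset

variable {K E : Type*} [Field K] [Field E] [Algebra K E]

theorem mem_qcoset_self (a : E) : a ∈ qcoset K a := ⟨1, by simp⟩

theorem mul_mem_qcoset_iff {a : E} (ha : a ≠ 0) (x : E) :
    x * a ∈ qcoset K a ↔ x ∈ Set.range (algebraMap K E) :=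
  exists_congr fun _ => mul_left_inj' ha

theorem mem_range_of_qcoset_eq_qcoset_mul {a x : E} (ha : a ≠ 0)
    (h : qcoset K a = qcoset K (x * a)) :
    x ∈ Set.range (algebraMap K E) :=
  (mul_mem_qcoset_iff ha x).mp (h ▸ mem_qcoset_self (x * a))

end Qcoset

/-- The identity `a · y(xa) = (ya) · (xa)` breaks the Sidon property unless `x` or `y` lies in `K`. -/
theorem not_isSidonSet_of_mul_mem {K E : Type*} [Field K] [Field E] [Algebra K E] {W : Set E}
    {a x y : E} (ha : a ≠ 0) (hx : x ∉ Set.range (algebraMap K E))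
    (hy : y ∉ Set.range (algebraMap K E)) (ha_mem : a ∈ W) (hxa : x * a ∈ W) (hya : y * a ∈ W)
    (hyxa : y * (x * a) ∈ W) : ¬ IsSidonSet K W := by
  have hx0 : x ≠ 0 := fun h => hx ⟨0, by simp [h]⟩
  have hy0 : y ≠ 0 := fun h => hy ⟨0, by simp [h]⟩
  intro hW
  have hpair := hW a ha_mem (y * (x * a)) hyxa (y * a) hya (x * a) hxa ha
    (by positivity) (by positivity) (by positivity) (by ring)
  have : qcoset K a ∈ ({qcoset K (y * a), qcoset K (x * a)} : Set (Set E)) :=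
    hpair ▸ Set.mem_insert _ _
  rcases this with h | h
  · exact hy (mem_range_of_qcoset_eq_qcoset_mul ha h)
  · exact hx (mem_range_of_qcoset_eq_qcoset_mul ha h)

theorem two_le_finrank_of_mul_mem {K E : Type*} [Field K] [Field E] [Algebra K E]
    [Module.Finite K E] {P : Submodule K E} {u y : E} (hu : u ≠ 0)
    (hy : y ∉ Set.range (algebraMap K E)) (hu_mem : u ∈ P) (hyu : y * u ∈ P) :
    2 ≤ Module.finrank K P := by
  have hli : LinearIndependent K ![(⟨u, hu_mem⟩ : P), ⟨y * u, hyu⟩] := by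
    refine (LinearIndependent.pair_iff' (by simpa using hu)).mpr fun c hc => hy ⟨c, ?_⟩
    have : c • u = y * u := congrArg Subtype.val hc
    rw [Algebra.smul_def] at this
    exact mul_right_cancel₀ hu this
  simpa using hli.fintype_card_le_finrank

theorem notMem_range_algebraMap_of_adjoin_eq_top {L E : Type*} [Field L] [Field E]
    [Algebra L E] {δ : E} (hδ : Algebra.adjoin L {δ} = ⊤) (hE : Module.finrank L E ≠ 1) :
    δ ∉ Set.range (algebraMap L E) := by
  rintro ⟨l, rfl⟩
  refine hE (Subalgebra.bot_eq_top_iff_finrank_eq_one.mp (top_le_iff.mp ?_))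
  exact hδ ▸ Algebra.adjoin_le (by simp)

section Tower

variable {K L E : Type*} [Field K] [Field L] [Field E] [Algebra K L] [Algebra L E] [Algebra K E]
  [IsScalarTower K L E]

theorem range_algebraMap_subset_range_algebraMap :
    Set.range (algebraMap K E) ⊆ Set.range (algebraMap L E) := by
  rintro _ ⟨c, rfl⟩
  exact ⟨algebraMap K L c, (IsScalarTower.algebraMap_apply K L E c).symm⟩

theorem algebraMap_mem_range_algebraMap_iff (α : L) :
    algebraMap L E α ∈ Set.range (algebraMap K E) ↔ α ∈ Set.range (algebraMap K L) := by
  simp only [Set.mem_range, IsScalarTower.algebraMap_apply K L E,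
    (algebraMap L E).injective.eq_iff]

end Tower

section SpanAddMul

variable {K L E : Type*} [Field K] [Field L] [Field E] [Algebra K L] [Algebra L E] [Algebra K E]

def spanAddMul (V : Submodule K L) (δ : E) : Submodule K E :=
  Submodule.span K {x : E | ∃ v₁ ∈ V, ∃ v₂ ∈ V, x = algebraMap L E v₁ + δ * algebraMap L E v₂}

variable {V : Submodule K L} {v : L}

theorem algebraMap_mem_spanAddMul (δ : E) (hv : v ∈ V) : algebraMap L E v ∈ spanAddMul V δ :=
  Submodule.subset_span ⟨v, hv, 0, V.zero_mem, by simp⟩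

theorem mul_algebraMap_mem_spanAddMul (δ : E) (hv : v ∈ V) :
    δ * algebraMap L E v ∈ spanAddMul V δ :=
  Submodule.subset_span ⟨0, V.zero_mem, v, hv, by simp⟩

end SpanAddMul

theorem Submodule.exists_ne_zero_mul_mem_of_inf_map_mulLeft_ne_bot {K L : Type*} [Field K]
    [Field L] [Algebra K L] {V : Submodule K L} {α : L}
    (h : V ⊓ V.map (LinearMap.mulLeft K α) ≠ ⊥) : ∃ t ∈ V, t ≠ 0 ∧ α * t ∈ V := by
  obtain ⟨_, ⟨hV, t, ht, rfl⟩, h0⟩ := (Submodule.ne_bot_iff _).mp h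
  exact ⟨t, ht, fun h => h0 (by simp [h]), hV⟩

theorem stmt_16_general {K L E : Type*} [Field K] [Field L] [Field E]
    [Algebra K L] [Algebra L E] [Algebra K E] [IsScalarTower K L E]
    [Fintype E]
    (V : Submodule K L)
    (hV : ∃ α : L, α ∉ Set.range (algebraMap K L) ∧
      Module.finrank K ↥(V ⊓ V.map (LinearMap.mulLeft K α)) = 1)
    (δ : E) (hδ : Algebra.adjoin L {δ} = ⊤) (hdeg : 2 < Module.finrank L E) :
    ¬ IsSidonSet K ((Submodule.span K {x : E | ∃ v₁ ∈ V, ∃ v₂ ∈ V,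
        x = algebraMap L E v₁ + δ * algebraMap L E v₂} : Submodule K E) : Set E) ∧
    ∃ α : L, α ∉ Set.range (algebraMap K L) ∧
      2 ≤ Module.finrank K
        ↥((Submodule.span K {x : E | ∃ v₁ ∈ V, ∃ v₂ ∈ V,
            x = algebraMap L E v₁ + δ * algebraMap L E v₂}) ⊓
          (Submodule.span K {x : E | ∃ v₁ ∈ V, ∃ v₂ ∈ V,
            x = algebraMap L E v₁ + δ * algebraMap L E v₂}).map
              (LinearMap.mulLeft K (algebraMap L E α))) := by
  obtain ⟨α, hα, hdim⟩ := hV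
  obtain ⟨t, ht, ht0, hαt⟩ := Submodule.exists_ne_zero_mul_mem_of_inf_map_mulLeft_ne_bot
    (V := V) (α := α) fun h => by rw [h, finrank_bot] at hdim; exact zero_ne_one hdim
  have hδK : δ ∉ Set.range (algebraMap K E) := fun h =>
    notMem_range_algebraMap_of_adjoin_eq_top hδ (by omega)
      (range_algebraMap_subset_range_algebraMap (L := L) h)
  have hαK : algebraMap L E α ∉ Set.range (algebraMap K E) :=
    (algebraMap_mem_range_algebraMap_iff α).not.mpr hα
  set a := algebraMap L E t
  set x := algebraMap L E α
  have ha : a ≠ 0 := by simpa [a] using ht0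
  have ha_mem : a ∈ spanAddMul V δ := algebraMap_mem_spanAddMul δ ht
  have hδa : δ * a ∈ spanAddMul V δ := mul_algebraMap_mem_spanAddMul δ ht
  have hxa : x * a ∈ spanAddMul V δ :=
    map_mul (algebraMap L E) α t ▸ algebraMap_mem_spanAddMul δ hαt
  have hδxa : δ * (x * a) ∈ spanAddMul V δ :=
    map_mul (algebraMap L E) α t ▸ mul_algebraMap_mem_spanAddMul δ hαt
  refine ⟨not_isSidonSet_of_mul_mem ha hαK hδK ha_mem hxa hδa hδxa, α, hα,
    two_le_finrank_of_mul_mem (mul_ne_zero ?_ ha) hδK ⟨hxa, Submodule.mem_map_of_mem ha_mem⟩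
      ⟨hδxa, ?_⟩⟩
  · exact fun h => hαK ⟨0, by simp [h]⟩
  · exact mul_left_comm δ x a ▸ Submodule.mem_map_of_mem hδa

/-- `V + δV` is never a Sidon space: some `α ∈ F_{q^n} \ F_q` gives an
intersection of dimension at least `2`. -/
theorem stmt_16 {K L E : Type*} [Field K] [Field L] [Field E]
    [Algebra K L] [Algebra L E] [Algebra K E] [IsScalarTower K L E]
    [Fintype K] [Fintype L] [Fintype E]
    (V : Submodule K L)
    (hV : ∃ α : L, α ∉ Set.range (algebraMap K L) ∧
      Module.finrank K ↥(V ⊓ V.map (LinearMap.mulLeft K α)) = 1)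
    (δ : E) (hδ : Algebra.adjoin L {δ} = ⊤) (hdeg : 2 < Module.finrank L E) :
    ¬ IsSidonSet K ((Submodule.span K {x : E | ∃ v₁ ∈ V, ∃ v₂ ∈ V,
        x = algebraMap L E v₁ + δ * algebraMap L E v₂} : Submodule K E) : Set E) ∧
    ∃ α : L, α ∉ Set.range (algebraMap K L) ∧
      2 ≤ Module.finrank K
        ↥((Submodule.span K {x : E | ∃ v₁ ∈ V, ∃ v₂ ∈ V,
            x = algebraMap L E v₁ + δ * algebraMap L E v₂}) ⊓
          (Submodule.span K {x : E | ∃ v₁ ∈ V, ∃ v₂ ∈ V,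
            x = algebraMap L E v₁ + δ * algebraMap L E v₂}).map
              (LinearMap.mulLeft K (algebraMap L E α))) :=
  stmt_16_general V hV δ hδ hdeg
end

section
/- Let k | n, and let U, W be m-dimensional F_q-subspaces of F_{q^k}^2 and γ, ξ ∈ F_{q^n} such that {1,γ} and {1,ξ} are F_{q^k}-linearly independent, with V_{U,γ} and V_{W,ξ} not contained in any multiplicative coset of F_{q^k}. Then V_{U,γ} and V_{W,ξ} are semilinearly equivalent under (λ, σ) ∈ F_{q^n}^* × Aut(F_{q^n}) (i.e., λ V_{U,γ}^σ = V_{W,ξ}) if and only if there exists an invertible 2×2 matrix A = ((c,d),(a,b)) over F_{q^k} with ξ = (a + bγ^σ)/(c + dγ^σ), λ = 1/(c + dγ^σ), and U^σ = W·A. -/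
section Aux

variable {M L : Type*} [Field M] [Field L] [Algebra M L]

/-- Equating coefficients along `1, t` with `t` not in the image of `M`. -/
lemma coeff_eq_aux (t : L) (ht : t ∉ Set.range (algebraMap M L)) {a b a' b' : M}
    (h : algebraMap M L a + algebraMap M L b * t
       = algebraMap M L a' + algebraMap M L b' * t) : a = a' ∧ b = b' := by
  have hinj : Function.Injective (algebraMap M L) := (algebraMap M L).injective
  by_cases hb : b = b'
  · subst hb
    refine ⟨hinj ?_, rfl⟩
    exact add_right_cancel h
  · exfalso
    have hbb : b' - b ≠ 0 := sub_ne_zero.mpr (Ne.symm hb)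
    apply ht
    refine ⟨(a - a') / (b' - b), ?_⟩
    have hBne : algebraMap M L b' - algebraMap M L b ≠ 0 := by
      intro h0
      exact hbb (hinj (by rw [map_sub, h0, map_zero]))
    rw [map_div₀, map_sub, map_sub, div_eq_iff hBne]
    linear_combination h

end Aux

/-- characterization of the semilinear equivalence of `V_{U,γ}` and
`V_{W,ξ}` via an invertible matrix `A = ((c,d),(a,b))` over `F_{q^k}`. -/
theorem stmt_17 {K M L : Type*} [Field K] [Field M] [Field L]
    [Algebra K M] [Algebra M L] [Algebra K L] [IsScalarTower K M L]
    [Fintype K] [Fintype M] [Fintype L]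
    (m : ℕ) (U W : Submodule K (M × M))
    (hU : Module.finrank K U = m) (hW : Module.finrank K W = m)
    (γ ξ : L)
    (hγ : γ ∉ Set.range (algebraMap M L)) (hξ : ξ ∉ Set.range (algebraMap M L))
    (hUc : ¬ ∃ α : L,
      {x : L | ∃ p ∈ U, x = algebraMap M L p.1 + algebraMap M L p.2 * γ}
        ⊆ {y : L | ∃ c : M, y = α * algebraMap M L c})
    (hWc : ¬ ∃ α : L,
      {x : L | ∃ p ∈ W, x = algebraMap M L p.1 + algebraMap M L p.2 * ξ}
        ⊆ {y : L | ∃ c : M, y = α * algebraMap M L c})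
    (lam : L) (hlam : lam ≠ 0) (σ : L ≃+* L) (τ : M ≃+* M)
    (hστ : ∀ x : M, σ (algebraMap M L x) = algebraMap M L (τ x)) :
    ({y : L | ∃ p ∈ U, y = lam * σ (algebraMap M L p.1 + algebraMap M L p.2 * γ)}
        = {x : L | ∃ p ∈ W, x = algebraMap M L p.1 + algebraMap M L p.2 * ξ}) ↔
      ∃ a b c d : M, c * b - d * a ≠ 0 ∧
        ξ = (algebraMap M L a + algebraMap M L b * σ γ)
              / (algebraMap M L c + algebraMap M L d * σ γ) ∧
        lam = 1 / (algebraMap M L c + algebraMap M L d * σ γ) ∧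
        {p : M × M | ∃ u ∈ U, p = (τ u.1, τ u.2)}
          = {p : M × M | ∃ w ∈ W, p = (w.1 * c + w.2 * a, w.1 * d + w.2 * b)} := by

  set φ := algebraMap M L with hφ
  have hinj : Function.Injective φ := (algebraMap M L).injective
  set g := σ γ with hgdef
  have hg : g ∉ Set.range φ := by
    rintro ⟨x, hx⟩
    apply hγ
    refine ⟨τ.symm x, ?_⟩
    apply σ.injective
    rw [hστ, τ.apply_symm_apply]
    exact hx.trans hgdef
  have hσexp : ∀ x1 x2 : M, σ (φ x1 + φ x2 * γ) = φ (τ x1) + φ (τ x2) * g := by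
    intro x1 x2
    rw [map_add, map_mul, hστ, hστ]
  constructor
  · -- forward direction
    intro hset
    push_neg at hWc
    obtain ⟨y, hyV, hy0'⟩ := Set.not_subset.mp (hWc 0)
    obtain ⟨qq, hqW, hy⟩ := hyV
    have hy0 : y ≠ 0 := fun h => hy0' ⟨0, by rw [h, zero_mul]⟩
    obtain ⟨x, hxV, hxy⟩ := Set.not_subset.mp (hWc y)
    obtain ⟨pp, hpW, hx⟩ := hxV
    obtain ⟨q1, hq1d⟩ : ∃ z, z = qq.1 := ⟨_, rfl⟩
    obtain ⟨q2, hq2d⟩ : ∃ z, z = qq.2 := ⟨_, rfl⟩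
    obtain ⟨p1, hp1d⟩ : ∃ z, z = pp.1 := ⟨_, rfl⟩
    obtain ⟨p2, hp2d⟩ : ∃ z, z = pp.2 := ⟨_, rfl⟩
    rw [← hq1d, ← hq2d] at hy
    rw [← hp1d, ← hp2d] at hx
    have hq : ¬(q1 = 0 ∧ q2 = 0) := by
      rintro ⟨h1, h2⟩
      apply hy0
      rw [hy, h1, h2]; simp
    have hD : q1 * p2 - q2 * p1 ≠ 0 := by
      intro h0
      have h0' : φ q1 * φ p2 = φ q2 * φ p1 := by
        rw [← map_mul, ← map_mul]
        exact congrArg φ (by linear_combination h0)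
      rcases eq_or_ne q1 0 with hq10 | hq10
      · have hq20 : q2 ≠ 0 := fun h => hq ⟨hq10, h⟩
        have hp10 : p1 = 0 := by
          have : q2 * p1 = 0 := by linear_combination -h0 + p2 * hq10
          rcases mul_eq_zero.mp this with h | h
          · exact absurd h hq20
          · exact h
        apply hxy
        refine ⟨p2 / q2, ?_⟩
        have hφq2 : φ q2 ≠ 0 := fun h => hq20 (hinj (by rw [h, map_zero]))
        rw [hx, hy, map_div₀, hp10, hq10]
        field_simp
        simp only [map_zero]
        ring
      · apply hxy
        refine ⟨p1 / q1, ?_⟩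
        have hφq1 : φ q1 ≠ 0 := fun h => hq10 (hinj (by rw [h, map_zero]))
        rw [hx, hy, map_div₀]
        field_simp
        linear_combination ξ * h0'
    -- pull x and y back through the set equality
    have hyL : y ∈ {y : L | ∃ p ∈ U, y = lam * σ (φ p.1 + φ p.2 * γ)} := by
      rw [hset]; exact ⟨qq, hqW, by rw [hy, hq1d, hq2d]⟩
    have hxL : x ∈ {y : L | ∃ p ∈ U, y = lam * σ (φ p.1 + φ p.2 * γ)} := by
      rw [hset]; exact ⟨pp, hpW, by rw [hx, hp1d, hp2d]⟩
    obtain ⟨uu, huU, hyu⟩ := hyL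
    obtain ⟨vv, hvU, hxu⟩ := hxL
    obtain ⟨s1, hs1d⟩ : ∃ z, z = τ uu.1 := ⟨_, rfl⟩
    obtain ⟨s2, hs2d⟩ : ∃ z, z = τ uu.2 := ⟨_, rfl⟩
    obtain ⟨t1, ht1d⟩ : ∃ z, z = τ vv.1 := ⟨_, rfl⟩
    obtain ⟨t2, ht2d⟩ : ∃ z, z = τ vv.2 := ⟨_, rfl⟩
    have E1 : φ q1 + φ q2 * ξ = lam * (φ s1 + φ s2 * g) := by
      rw [← hy, hyu, hσexp, hs1d, hs2d]
    have E2 : φ p1 + φ p2 * ξ = lam * (φ t1 + φ t2 * g) := by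
      rw [← hx, hxu, hσexp, ht1d, ht2d]
    obtain ⟨e, hedef⟩ : ∃ z, z = (q1 * p2 - q2 * p1)⁻¹ := ⟨_, rfl⟩
    have heD : e * (q1 * p2 - q2 * p1) = 1 := by rw [hedef]; exact inv_mul_cancel₀ hD
    have hE : φ e * (φ q1 * φ p2 - φ q2 * φ p1) = 1 := by
      have := congrArg φ heD
      rw [map_one, map_mul, map_sub, map_mul, map_mul] at this
      exact this
    obtain ⟨c, hc⟩ : ∃ z, z = e * (p2 * s1 - q2 * t1) := ⟨_, rfl⟩
    obtain ⟨d, hd⟩ : ∃ z, z = e * (p2 * s2 - q2 * t2) := ⟨_, rfl⟩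
    obtain ⟨a, ha⟩ : ∃ z, z = e * (q1 * t1 - p1 * s1) := ⟨_, rfl⟩
    obtain ⟨b, hb⟩ : ∃ z, z = e * (q1 * t2 - p1 * s2) := ⟨_, rfl⟩
    have hcφ : φ c = φ e * (φ p2 * φ s1 - φ q2 * φ t1) := by
      rw [hc, map_mul, map_sub, map_mul, map_mul]
    have hdφ : φ d = φ e * (φ p2 * φ s2 - φ q2 * φ t2) := by
      rw [hd, map_mul, map_sub, map_mul, map_mul]
    have haφ : φ a = φ e * (φ q1 * φ t1 - φ p1 * φ s1) := by
      rw [ha, map_mul, map_sub, map_mul, map_mul]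
    have hbφ : φ b = φ e * (φ q1 * φ t2 - φ p1 * φ s2) := by
      rw [hb, map_mul, map_sub, map_mul, map_mul]
    have h1 : lam * (φ c + φ d * g) = 1 := by
      rw [hcφ, hdφ]
      linear_combination (-(φ e * φ p2)) * E1 + (φ e * φ q2) * E2 + hE
    have hXi : lam * (φ a + φ b * g) = ξ := by
      rw [haφ, hbφ]
      linear_combination (φ e * φ p1) * E1 + (-(φ e * φ q1)) * E2 + ξ * hE
    have hden : φ c + φ d * g ≠ 0 := by
      intro h0
      rw [h0, mul_zero] at h1
      exact one_ne_zero h1.symm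
    have hlamEq : lam = 1 / (φ c + φ d * g) := by
      rw [eq_div_iff hden]; exact h1
    have hXiEq : ξ = (φ a + φ b * g) / (φ c + φ d * g) := by
      rw [eq_div_iff hden, ← hXi]
      linear_combination (φ a + φ b * g) * h1
    have hcd : ¬(c = 0 ∧ d = 0) := by
      rintro ⟨h1', h2'⟩
      apply hden
      rw [h1', h2']; simp
    have hdet : c * b - d * a ≠ 0 := by
      intro h0
      apply hξ
      have hdet0 : φ c * φ b = φ d * φ a := by
        rw [← map_mul, ← map_mul]
        exact congrArg φ (by linear_combination h0)
      rcases eq_or_ne c 0 with hc0 | hc0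
      · have hd0 : d ≠ 0 := fun h => hcd ⟨hc0, h⟩
        have hφd : φ d ≠ 0 := fun h => hd0 (hinj (by rw [h, map_zero]))
        have hφc : φ c = 0 := by rw [hc0, map_zero]
        have ha0 : φ a = 0 := by
          rcases mul_eq_zero.mp (by rw [← hdet0, hφc, zero_mul] : φ d * φ a = 0) with h | h
          · exact absurd h hφd
          · exact h
        refine ⟨b / d, ?_⟩
        rw [map_div₀, div_eq_iff hφd]
        linear_combination φ d * hXi - φ b * h1 - (lam * φ d) * ha0 + (lam * φ b) * hφc
      · have hφc : φ c ≠ 0 := fun h => hc0 (hinj (by rw [h, map_zero]))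
        refine ⟨a / c, ?_⟩
        rw [map_div₀, div_eq_iff hφc]
        linear_combination φ c * hXi - φ a * h1 - lam * g * hdet0
    have hkey : ∀ s1' s2' w1 w2 : M,
        lam * (φ s1' + φ s2' * g) = φ w1 + φ w2 * ξ →
        s1' = w1 * c + w2 * a ∧ s2' = w1 * d + w2 * b := by
      intro s1' s2' w1 w2 h
      have h'' : lam * (φ s1' + φ s2' * g)
          = lam * (φ (w1 * c + w2 * a) + φ (w1 * d + w2 * b) * g) := by
        simp only [map_add, map_mul]
        linear_combination h - φ w1 * h1 - φ w2 * hXi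
      exact coeff_eq_aux g hg (mul_left_cancel₀ hlam h'')
    refine ⟨a, b, c, d, hdet, hXiEq, hlamEq, ?_⟩
    ext p
    simp only [Set.mem_setOf_eq]
    constructor
    · rintro ⟨u, huU', hp⟩
      have hEmem : lam * σ (φ u.1 + φ u.2 * γ)
          ∈ {x : L | ∃ p ∈ W, x = φ p.1 + φ p.2 * ξ} := by
        rw [← hset]; exact ⟨u, huU', rfl⟩
      obtain ⟨w, hwW, hEw⟩ := hEmem
      rw [hσexp] at hEw
      obtain ⟨e1, e2⟩ := hkey _ _ _ _ hEw
      exact ⟨w, hwW, by rw [hp, e1, e2]⟩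
    · rintro ⟨w, hwW, hp⟩
      have hEmem : φ w.1 + φ w.2 * ξ
          ∈ {y : L | ∃ p ∈ U, y = lam * σ (φ p.1 + φ p.2 * γ)} := by
        rw [hset]; exact ⟨w, hwW, rfl⟩
      obtain ⟨u, huU', hEu⟩ := hEmem
      rw [hσexp] at hEu
      obtain ⟨e1, e2⟩ := hkey _ _ _ _ hEu.symm
      exact ⟨u, huU', by rw [hp, e1, e2]⟩
  · -- reverse direction
    rintro ⟨a, b, c, d, hdet, hXiEq, hlamEq, hUW⟩
    have hden : φ c + φ d * g ≠ 0 := by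
      intro h0
      apply hlam
      rw [hlamEq, h0, div_zero]
    have h1 : lam * (φ c + φ d * g) = 1 := by
      rw [hlamEq, one_div, inv_mul_cancel₀ hden]
    have hXi : lam * (φ a + φ b * g) = ξ := by
      rw [hlamEq, hXiEq, div_mul_eq_mul_div, one_mul]
    have hkeyr : ∀ s1' s2' w1 w2 : M,
        s1' = w1 * c + w2 * a → s2' = w1 * d + w2 * b →
        lam * (φ s1' + φ s2' * g) = φ w1 + φ w2 * ξ := by
      intro s1' s2' w1 w2 e1 e2
      rw [e1, e2]
      simp only [map_add, map_mul]
      linear_combination φ w1 * h1 + φ w2 * hXi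
    ext y
    simp only [Set.mem_setOf_eq]
    constructor
    · rintro ⟨u, huU', hyu⟩
      have hmem : ((τ u.1, τ u.2) : M × M) ∈ {p : M × M | ∃ w ∈ W,
          p = (w.1 * c + w.2 * a, w.1 * d + w.2 * b)} := by
        rw [← hUW]; exact ⟨u, huU', rfl⟩
      obtain ⟨w, hwW, hpe⟩ := hmem
      simp only [Prod.mk.injEq] at hpe
      obtain ⟨e1, e2⟩ := hpe
      refine ⟨w, hwW, ?_⟩
      rw [hyu, hσexp]
      exact hkeyr _ _ _ _ e1 e2
    · rintro ⟨w, hwW, hyw⟩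
      have hmem : ((w.1 * c + w.2 * a, w.1 * d + w.2 * b) : M × M)
          ∈ {p : M × M | ∃ u ∈ U, p = (τ u.1, τ u.2)} := by
        rw [hUW]; exact ⟨w, hwW, rfl⟩
      obtain ⟨u, huU', hpe⟩ := hmem
      simp only [Prod.mk.injEq] at hpe
      obtain ⟨e1, e2⟩ := hpe
      refine ⟨u, huU', ?_⟩
      rw [hyw, hσexp]
      exact (hkeyr _ _ _ _ e1.symm e2.symm).symm
end
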